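/- arXiv:2509.01108 — 11 statements merged into one kernel-verified Lean document; each statement's English description precedes it below -/
import Mathlib

section
/- Motzkin's theorem of the alternative: For given matrices A ∈ ℝ^{p×n} (with p ≥ 1) and B ∈ ℝ^{q×n}, exactly one of the following holds: either there exists x ∈ ℝ^n with Ax < 0 (componentwise strict) and Bx ≤ 0 (componentwise), or there exist y ∈ ℝ^p and z ∈ ℝ^q with Aᵀy + Bᵀz = 0, y ≥ 0 componentwise with y ≠ 0, and z ≥ 0 componentwise. -/
/-- Farkas–Bartl lemma: if every `x` satisfying the homogeneous inequalities
`a i x ≤ 0` (for `i ∈ s`) also satisfies `b x ≤ 0`, then `b` is a nonnegative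
combination of the `a i`. -/
theorem farkasBartl_aux {V ι : Type*} [AddCommGroup V] [Module ℝ V] :
    ∀ (s : Finset ι) (a : ι → V →ₗ[ℝ] ℝ) (b : V →ₗ[ℝ] ℝ),
      (∀ x : V, (∀ i ∈ s, a i x ≤ 0) → b x ≤ 0) →
      ∃ u : ι → ℝ, (∀ i, 0 ≤ u i) ∧ ∀ x : V, b x = ∑ i ∈ s, u i * a i x := by
  classical
  intro s
  induction s using Finset.induction_on with
  | empty =>
    intro a b h
    refine ⟨0, fun i => le_rfl, fun x => ?_⟩
    have h1 := h x (by simp)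
    have h2 := h (-x) (by simp)
    rw [map_neg] at h2
    simp only [Finset.sum_empty, Pi.zero_apply]
    linarith
  | @insert i₀ s hi₀ ih =>
    intro a b h
    by_cases hc : ∀ x : V, (∀ i ∈ s, a i x ≤ 0) → b x ≤ 0
    · obtain ⟨u, hu, hsum⟩ := ih a b hc
      refine ⟨Function.update u i₀ 0, fun i => ?_, fun x => ?_⟩
      · rcases eq_or_ne i i₀ with rfl | hne
        · simp
        · simpa [Function.update_of_ne hne] using hu i
      · rw [Finset.sum_insert hi₀, Function.update_self, zero_mul, zero_add, hsum x]
        exact Finset.sum_congr rfl fun i hi =>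
          by rw [Function.update_of_ne (by rintro rfl; exact hi₀ hi)]
    · push_neg at hc
      obtain ⟨x₀, hx₀, hbx₀⟩ := hc
      have hc0 : 0 < a i₀ x₀ := by
        by_contra h'
        push_neg at h'
        have := h x₀ (by
          intro i hi
          rcases Finset.mem_insert.mp hi with rfl | hi
          · exact h'
          · exact hx₀ i hi)
        linarith
      set c : ℝ := a i₀ x₀ with hc
      have hcne : c ≠ 0 := ne_of_gt hc0
      set P : V →ₗ[ℝ] V := LinearMap.id - LinearMap.smulRight (c⁻¹ • a i₀) x₀ with hP
      have hPx : ∀ x : V, P x = x - (c⁻¹ * a i₀ x) • x₀ := by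
        intro x; simp [hP, LinearMap.smulRight_apply]
      have hPval : ∀ (f : V →ₗ[ℝ] ℝ) (x : V),
          f (P x) = f x - (c⁻¹ * a i₀ x) * f x₀ := by
        intro f x
        rw [hPx, map_sub, map_smul, smul_eq_mul]
      have hPi₀ : ∀ x : V, a i₀ (P x) = 0 := by
        intro x
        rw [hPval]
        field_simp
        rw [← hc]; ring
      obtain ⟨u, hu, hsum⟩ := ih (fun i => (a i).comp P) (b.comp P) (by
        intro x hx
        exact h (P x) (by
          intro i hi
          rcases Finset.mem_insert.mp hi with rfl | hi
          · exact le_of_eq (hPi₀ x)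
          · exact hx i hi))
      have hS : ∑ i ∈ s, u i * a i x₀ ≤ 0 :=
        Finset.sum_nonpos fun i hi => mul_nonpos_of_nonneg_of_nonpos (hu i) (hx₀ i hi)
      set d : ℝ := c⁻¹ * (b x₀ - ∑ i ∈ s, u i * a i x₀) with hd
      have hd0 : 0 ≤ d := by
        apply mul_nonneg (le_of_lt (inv_pos.mpr hc0))
        linarith
      refine ⟨Function.update u i₀ d, fun i => ?_, fun x => ?_⟩
      · rcases eq_or_ne i i₀ with rfl | hne
        · simpa using hd0
        · simpa [Function.update_of_ne hne] using hu i
      · have hsx := hsum x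
        simp only [LinearMap.comp_apply] at hsx
        rw [hPval b x] at hsx
        have expand : ∑ i ∈ s, u i * a i (P x)
            = (∑ i ∈ s, u i * a i x) - (c⁻¹ * a i₀ x) * ∑ i ∈ s, u i * a i x₀ := by
          rw [Finset.mul_sum, ← Finset.sum_sub_distrib]
          exact Finset.sum_congr rfl fun i _ => by rw [hPval (a i) x]; ring
        rw [expand] at hsx
        rw [Finset.sum_insert hi₀, Function.update_self]
        have hrest : ∑ i ∈ s, Function.update u i₀ d i * a i x = ∑ i ∈ s, u i * a i x :=
          Finset.sum_congr rfl fun i hi =>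
            by rw [Function.update_of_ne (by rintro rfl; exact hi₀ hi)]
        rw [hrest, hd]
        linear_combination hsx

open Matrix in
/-- The two alternatives in Motzkin's theorem cannot both hold. -/
theorem motzkin_not_both (p q n : ℕ)
    (A : Matrix (Fin p) (Fin n) ℝ) (B : Matrix (Fin q) (Fin n) ℝ)
    (x : Fin n → ℝ) (y : Fin p → ℝ) (z : Fin q → ℝ)
    (hx1 : ∀ i, A.mulVec x i < 0) (hx2 : ∀ j, B.mulVec x j ≤ 0)
    (hyz : A.transpose.mulVec y + B.transpose.mulVec z = 0)
    (hy : ∀ i, 0 ≤ y i) (hy0 : y ≠ 0) (hz : ∀ j, 0 ≤ z j) : False := by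
  have key : y ⬝ᵥ (A.mulVec x) + z ⬝ᵥ (B.mulVec x) = 0 := by
    have := congrArg (fun v => v ⬝ᵥ x) hyz
    simpa [add_dotProduct, Matrix.mulVec_transpose,
      ← Matrix.dotProduct_mulVec] using this
  have h1 : y ⬝ᵥ (A.mulVec x) < 0 := by
    obtain ⟨i₀, hi₀⟩ := Function.ne_iff.mp hy0
    have hi₀' : 0 < y i₀ := lt_of_le_of_ne (hy i₀) (Ne.symm hi₀)
    have : ∑ i, y i * A.mulVec x i < ∑ i : Fin p, (0 : ℝ) := by
      apply Finset.sum_lt_sum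
      · intro i _; exact mul_nonpos_of_nonneg_of_nonpos (hy i) (le_of_lt (hx1 i))
      · exact ⟨i₀, Finset.mem_univ _, mul_neg_of_pos_of_neg hi₀' (hx1 i₀)⟩
    simpa [dotProduct] using this
  have h2 : z ⬝ᵥ (B.mulVec x) ≤ 0 := by
    apply Finset.sum_nonpos
    intro j _
    exact mul_nonpos_of_nonneg_of_nonpos (hz j) (hx2 j)
  linarith

/-- If the primal system is infeasible, the dual system is feasible. -/
theorem motzkin_of_not_primal (p q n : ℕ)
    (A : Matrix (Fin p) (Fin n) ℝ) (B : Matrix (Fin q) (Fin n) ℝ)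
    (hP : ¬ (∃ x : Fin n → ℝ, (∀ i, A.mulVec x i < 0) ∧ (∀ j, B.mulVec x j ≤ 0))) :
    (∃ (y : Fin p → ℝ) (z : Fin q → ℝ),
        A.transpose.mulVec y + B.transpose.mulVec z = 0 ∧
        (∀ i, 0 ≤ y i) ∧ y ≠ 0 ∧ (∀ j, 0 ≤ z j)) := by
  set a : Fin p ⊕ Fin q → ((Fin n → ℝ) × ℝ) →ₗ[ℝ] ℝ :=
    Sum.elim
      (fun i => (LinearMap.proj i).comp (A.mulVecLin.comp (LinearMap.fst ℝ _ _))
        + LinearMap.snd ℝ _ _)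
      (fun j => (LinearMap.proj j).comp (B.mulVecLin.comp (LinearMap.fst ℝ _ _))) with ha
  have hal : ∀ i w, a (Sum.inl i) w = A.mulVec w.1 i + w.2 := fun i w => rfl
  have har : ∀ j w, a (Sum.inr j) w = B.mulVec w.1 j := fun j w => rfl
  obtain ⟨u, hu, hsum⟩ := farkasBartl_aux Finset.univ a (LinearMap.snd ℝ (Fin n → ℝ) ℝ) (by
    intro w hw
    by_contra ht
    push_neg at ht
    simp only [LinearMap.snd_apply] at ht
    refine hP ⟨w.1, fun i => ?_, fun j => ?_⟩
    · have := hw (Sum.inl i) (Finset.mem_univ _)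
      rw [hal] at this
      linarith
    · have := hw (Sum.inr j) (Finset.mem_univ _)
      rwa [har] at this)
  refine ⟨fun i => u (Sum.inl i), fun j => u (Sum.inr j), ?_, fun i => hu _, ?_, fun j => hu _⟩
  · funext k
    have := hsum (Pi.single k 1, 0)
    simp only [LinearMap.snd_apply, Fintype.sum_sum_type, hal, har,
      Matrix.mulVec_single, MulOpposite.op_one, one_smul, add_zero, mul_one] at this
    simp only [Pi.add_apply, Pi.zero_apply, Matrix.mulVec, dotProduct,
      Matrix.transpose_apply]
    rw [this]
    congr 1 <;> exact Finset.sum_congr rfl fun i _ => mul_comm _ _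
  · intro hy0
    have := hsum (0, 1)
    simp only [LinearMap.snd_apply, Fintype.sum_sum_type, hal, har, Matrix.mulVec_zero] at this
    have h1 : (1:ℝ) = ∑ i : Fin p, u (Sum.inl i) := by simpa using this
    rw [show (fun i => u (Sum.inl i)) = (0 : Fin p → ℝ) from hy0] at h1
    simp at h1

/-- Motzkin's theorem of the alternative. -/
theorem motzkin_alternative (p q n : ℕ) (hp : 0 < p)
    (A : Matrix (Fin p) (Fin n) ℝ) (B : Matrix (Fin q) (Fin n) ℝ) :
    Xor' (∃ x : Fin n → ℝ, (∀ i, A.mulVec x i < 0) ∧ (∀ j, B.mulVec x j ≤ 0))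
      (∃ (y : Fin p → ℝ) (z : Fin q → ℝ),
        A.transpose.mulVec y + B.transpose.mulVec z = 0 ∧
        (∀ i, 0 ≤ y i) ∧ y ≠ 0 ∧ (∀ j, 0 ≤ z j)) := by
  by_cases hP : ∃ x : Fin n → ℝ, (∀ i, A.mulVec x i < 0) ∧ (∀ j, B.mulVec x j ≤ 0)
  · refine Or.inl ⟨hP, ?_⟩
    rintro ⟨y, z, hyz, hy, hy0, hz⟩
    obtain ⟨x, hx1, hx2⟩ := hP
    exact motzkin_not_both p q n A B x y z hx1 hx2 hyz hy hy0 hz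
  · exact Or.inr ⟨motzkin_of_not_primal p q n A B hP, hP⟩
end

section
/- If x̄ is a weakly efficient solution of the multiobjective problem (P) on an open set S and f is Fréchet differentiable, then there exists λ̄ ∈ Λ such that (x̄, λ̄) is a vector critical point of f, i.e., λ̄ ≥ 0, λ̄ ≠ 0, and λ̄ · Jf(x̄) = 0. -/
open Filter Topology

/-- A continuous linear functional on `Fin s → ℝ` is determined by its values on
the standard basis vectors. -/
lemma clm_eq_sum_aux {s : ℕ} (L : (Fin s → ℝ) →L[ℝ] ℝ) (v : Fin s → ℝ) :
    L v = ∑ j, v j * L (Pi.single j 1) := by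
  conv_lhs => rw [← Finset.univ_sum_single v]
  rw [map_sum]
  refine Finset.sum_congr rfl fun j _ => ?_
  have h : Pi.single j (v j) = v j • (Pi.single j (1 : ℝ) : Fin s → ℝ) := by
    rw [← Pi.single_smul, smul_eq_mul, mul_one]
  rw [h, map_smul, smul_eq_mul]

/-- A weakly efficient solution on an open set gives a vector critical point. -/
theorem weakly_efficient_is_vector_critical (s n : ℕ)
    (S : Set (Fin s → ℝ)) (hS : IsOpen S) (f : (Fin s → ℝ) → Fin n → ℝ)
    (hdiff : ∀ x ∈ S, ∀ i, DifferentiableAt ℝ (fun y => f y i) x)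
    (xbar : Fin s → ℝ) (hxbar : xbar ∈ S)
    (hweak : ¬ ∃ x ∈ S, ∀ i, f x i < f xbar i) :
    ∃ lam : Fin n → ℝ, ∑ i, lam i = 1 ∧ (∀ i, 0 ≤ lam i) ∧ lam ≠ 0 ∧
      ∀ v : Fin s → ℝ, ∑ i, lam i * fderiv ℝ (fun y => f y i) xbar v = 0 := by
  classical
  set D : Fin n → (Fin s → ℝ) →L[ℝ] ℝ := fun i => fderiv ℝ (fun y => f y i) xbar with hD
  -- Step 1: there is no common descent direction.
  have hnodesc : ¬ ∃ v : Fin s → ℝ, ∀ i, D i v < 0 := by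
    rintro ⟨v, hv⟩
    apply hweak
    have hmem : ∀ᶠ t : ℝ in 𝓝[>] (0 : ℝ), xbar + t • v ∈ S := by
      have hc : Continuous fun t : ℝ => xbar + t • v := by continuity
      have h0 : ∀ᶠ t in 𝓝 (0 : ℝ), xbar + t • v ∈ S := by
        have hmemS : S ∈ 𝓝 (xbar + (0 : ℝ) • v) := by
          simpa using hS.mem_nhds hxbar
        exact hc.continuousAt.eventually_mem hmemS
      exact h0.filter_mono nhdsWithin_le_nhds
    have hlt : ∀ i, ∀ᶠ t : ℝ in 𝓝[>] (0 : ℝ), f (xbar + t • v) i < f xbar i := by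
      intro i
      have hline : HasDerivAt (fun t : ℝ => xbar + t • v) v 0 := by
        simpa using ((hasDerivAt_id (0 : ℝ)).smul_const v).const_add xbar
      have h1 : HasFDerivAt (fun y => f y i) (D i) (xbar + (0 : ℝ) • v) := by
        simpa using (hdiff xbar hxbar i).hasFDerivAt
      have hcomp : HasDerivAt (fun t : ℝ => f (xbar + t • v) i) (D i v) 0 := by
        have := h1.comp_hasDerivAt 0 hline; exact this
      have hslope := hasDerivAt_iff_tendsto_slope.mp hcomp
      have hneg : ∀ᶠ t in 𝓝[≠] (0 : ℝ),
          slope (fun t : ℝ => f (xbar + t • v) i) 0 t < 0 :=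
        hslope.eventually_lt_const (hv i)
      have hsub : 𝓝[>] (0 : ℝ) ≤ 𝓝[≠] (0 : ℝ) :=
        nhdsWithin_mono 0 (fun x hx => ne_of_gt hx)
      filter_upwards [hneg.filter_mono hsub, self_mem_nhdsWithin] with t ht h0
      have h0' : (0 : ℝ) < t := h0
      rw [slope_def_field, sub_zero] at ht
      have hdiff' : f (xbar + t • v) i - f (xbar + (0 : ℝ) • v) i < 0 := by
        rcases div_neg_iff.mp ht with ⟨_, h⟩ | ⟨h, _⟩
        · linarith
        · exact h
      have : f (xbar + t • v) i < f (xbar + (0 : ℝ) • v) i := by linarith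
      simpa using this
    have hall : ∀ᶠ t : ℝ in 𝓝[>] (0 : ℝ),
        (∀ i, f (xbar + t • v) i < f xbar i) ∧ xbar + t • v ∈ S :=
      (eventually_all.2 hlt).and hmem
    obtain ⟨t, h1, h2⟩ := hall.exists
    exact ⟨xbar + t • v, h2, h1⟩
  -- Step 2: Gordan's theorem via separation.
  set g : Fin n → (Fin s → ℝ) := fun i j => D i (Pi.single j 1) with hg
  let T : (Fin n → ℝ) →ₗ[ℝ] (Fin s → ℝ) :=
    { toFun := fun l => ∑ i, l i • g i
      map_add' := by intro a b; simp [add_smul, Finset.sum_add_distrib]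
      map_smul' := by intro c a; simp [smul_smul, Finset.smul_sum] }
  have hC0 : (0 : Fin s → ℝ) ∈ ⇑T '' stdSimplex ℝ (Fin n) := by
    by_contra h0
    have hconv : Convex ℝ (⇑T '' stdSimplex ℝ (Fin n)) :=
      (convex_stdSimplex ℝ _).linear_image T
    have hTc : Continuous T := T.continuous_of_finiteDimensional
    have hcomp : IsCompact (⇑T '' stdSimplex ℝ (Fin n)) :=
      (isCompact_stdSimplex ℝ (Fin n)).image hTc
    obtain ⟨φ, u, hu0, hub⟩ :=
      geometric_hahn_banach_point_closed hconv hcomp.isClosed h0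
    have hupos : 0 < u := by simpa using hu0
    have hgi : ∀ i, u < φ (g i) := by
      intro i
      refine hub _ ⟨Pi.single i 1, single_mem_stdSimplex ℝ i, ?_⟩
      show ∑ k, (Pi.single i (1 : ℝ) : Fin n → ℝ) k • g k = g i
      simp [Pi.single_apply, ite_smul]
    refine hnodesc ⟨fun j => -φ (Pi.single j 1), fun i => ?_⟩
    have h1 : D i (fun j => -φ (Pi.single j 1))
        = ∑ j, (fun j => -φ (Pi.single j 1)) j * g i j := clm_eq_sum_aux (D i) _
    have h2 : φ (g i) = ∑ j, g i j * φ (Pi.single j 1) := clm_eq_sum_aux φ (g i)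
    have h3 : ∑ j, (fun j => -φ (Pi.single j 1)) j * g i j = -φ (g i) := by
      rw [h2, ← Finset.sum_neg_distrib]
      exact Finset.sum_congr rfl fun j _ => by ring
    rw [h1, h3]
    linarith [hgi i]
  obtain ⟨lam, hlam, hTlam⟩ := hC0
  refine ⟨lam, hlam.2, hlam.1, ?_, ?_⟩
  · intro h
    rw [h] at hlam
    simpa using hlam.2
  · intro v
    have hDv : ∀ i, D i v = ∑ j, v j * g i j := fun i => clm_eq_sum_aux (D i) v
    have hcol : ∀ j, ∑ i, lam i * g i j = 0 := by
      intro j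
      have := congrFun hTlam j
      simpa [T, Finset.sum_apply] using this
    calc ∑ i, lam i * D i v
        = ∑ i, ∑ j, lam i * (v j * g i j) := by
          refine Finset.sum_congr rfl fun i _ => ?_
          rw [hDv i, Finset.mul_sum]
      _ = ∑ j, ∑ i, lam i * (v j * g i j) := Finset.sum_comm
      _ = ∑ j, v j * ∑ i, lam i * g i j := by
          refine Finset.sum_congr rfl fun j _ => ?_
          rw [Finset.mul_sum]
          exact Finset.sum_congr rfl fun i _ => by ring
      _ = 0 := by simp [hcol]
end

section
/- Let f : S → ℝ^n be Fréchet differentiable on an open set S ⊆ ℝ^s. Suppose for every vector critical point (x̄, λ̄) (i.e., λ̄ ≥ 0, λ̄ ≠ 0, λ̄·Jf(x̄) = 0), the point x̄ is the unique global minimizer of x ↦ λ̄·f(x) on S. Then f is strictly invex: for all x, x̄ ∈ S with x ≠ x̄ there exists η ∈ ℝ^s with f(x) − f(x̄) > Jf(x̄)·η componentwise (strict inequality in every component). -/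
/-- If every vector critical point is the unique global solution of the
associated weighting problem, then `f` is strictly invex. -/
theorem unique_weighting_solution_implies_strictly_invex (s n : ℕ)
    (S : Set (Fin s → ℝ)) (hS : IsOpen S) (f : (Fin s → ℝ) → Fin n → ℝ)
    (hdiff : ∀ x ∈ S, ∀ i, DifferentiableAt ℝ (fun y => f y i) x)
    (hcrit_unique : ∀ xbar ∈ S, ∀ lam : Fin n → ℝ,
      (∀ i, 0 ≤ lam i) → lam ≠ 0 →
      (∀ v : Fin s → ℝ, ∑ i, lam i * fderiv ℝ (fun y => f y i) xbar v = 0) →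
      ∀ x ∈ S, x ≠ xbar → ∑ i, lam i * f xbar i < ∑ i, lam i * f x i) :
    ∀ x ∈ S, ∀ xbar ∈ S, x ≠ xbar → ∃ η : Fin s → ℝ,
      ∀ i, fderiv ℝ (fun z => f z i) xbar η < f x i - f xbar i := by
  intro x hx xbar hxbar hne
  by_contra hcon
  push_neg at hcon
  set c : Fin n → ℝ := fun i => f x i - f xbar i with hc
  -- the linear map given by the Jacobian
  let Lm : (Fin s → ℝ) →ₗ[ℝ] (Fin n → ℝ) :=
    { toFun := fun η i => fderiv ℝ (fun z => f z i) xbar η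
      map_add' := by intro a b; ext i; simp
      map_smul' := by intro t a; ext i; simp }
  set O : Set (Fin n → ℝ) := {y | ∀ i, y i < c i} with hO
  have hOopen : IsOpen O := by
    have : O = Set.pi Set.univ (fun i => Set.Iio (c i)) := by
      ext y; simp [hO, Set.mem_pi]
    rw [this]
    exact isOpen_set_pi Set.finite_univ (fun i _ => isOpen_Iio)
  have hOconv : Convex ℝ O := by
    have : O = Set.pi Set.univ (fun i => Set.Iio (c i)) := by
      ext y; simp [hO, Set.mem_pi]
    rw [this]
    exact convex_pi (fun i _ => convex_Iio (c i))
  have hVconv : Convex ℝ ((LinearMap.range Lm : Submodule ℝ (Fin n → ℝ)) : Set (Fin n → ℝ)) :=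
    (LinearMap.range Lm).convex
  have hdisj : Disjoint O ((LinearMap.range Lm : Submodule ℝ (Fin n → ℝ)) : Set (Fin n → ℝ)) := by
    rw [Set.disjoint_left]
    rintro y hy ⟨η, rfl⟩
    obtain ⟨i, hi⟩ := hcon η
    exact absurd (hy i) (not_lt.2 hi)
  obtain ⟨g, u, hgO, hgV⟩ := geometric_hahn_banach_open hOconv hOopen hVconv hdisj
  have hu0 : u ≤ 0 := by
    have := hgV 0 (Submodule.zero_mem _)
    simpa using this
  -- g vanishes on the range of Lm
  have hg0 : ∀ η, g (Lm η) = 0 := by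
    intro η
    by_contra h
    have hmem : ((u - 1) / g (Lm η)) • Lm η ∈
        ((LinearMap.range Lm : Submodule ℝ (Fin n → ℝ)) : Set (Fin n → ℝ)) :=
      Submodule.smul_mem _ _ ⟨η, rfl⟩
    have h1 := hgV _ hmem
    rw [map_smul, smul_eq_mul, div_mul_cancel₀ _ h] at h1
    linarith
  set lam : Fin n → ℝ := fun i => g (Pi.single i 1) with hlam
  have hg : ∀ y : Fin n → ℝ, g y = ∑ i, y i * lam i := by
    intro y
    have hy : y = ∑ i, y i • (Pi.single i (1 : ℝ) : Fin n → ℝ) := by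
      ext j
      simp [Pi.single_apply, Finset.sum_apply, mul_ite]
    conv_lhs => rw [hy]
    rw [map_sum]
    simp [smul_eq_mul]
    rfl
  -- witness point in O
  have hwitO : (fun i => c i - 1) ∈ O := fun i => by simp
  have hwit : g (fun i => c i - 1) < u := hgO _ hwitO
  -- lam is nonnegative
  have hlam_nonneg : ∀ j, 0 ≤ lam j := by
    intro j
    by_contra h
    push_neg at h
    set A : ℝ := ∑ i, (c i - 1) * lam i with hA
    set M : ℝ := max (A / lam j) 0 with hM
    have hM0 : 0 ≤ M := le_max_right _ _
    have hMA : M * lam j ≤ A := by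
      have h1 : A / lam j ≤ M := le_max_left _ _
      exact (div_le_iff_of_neg h).1 h1
    set y : Fin n → ℝ := fun i => (c i - 1) - (if i = j then M else 0) with hy
    have hyO : y ∈ O := by
      intro i
      simp only [hy]
      by_cases hij : i = j <;> simp [hij] <;> linarith
    have hgy : g y = A - M * lam j := by
      rw [hg]
      have : ∀ i, y i * lam i = (c i - 1) * lam i - (if i = j then M * lam j else 0) := by
        intro i
        by_cases hij : i = j <;> simp [hy, hij, sub_mul]
      simp only [this, Finset.sum_sub_distrib, Finset.sum_ite_eq', Finset.mem_univ, if_true]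
      rfl
    have := hgO y hyO
    rw [hgy] at this
    linarith
  -- lam · c ≤ 0
  have hlc : ∑ i, c i * lam i ≤ 0 := by
    by_contra h
    push_neg at h
    set T : ℝ := ∑ i, lam i with hT
    have hT0 : 0 ≤ T := Finset.sum_nonneg fun i _ => hlam_nonneg i
    set ε : ℝ := (∑ i, c i * lam i) / (T + 1) with hε
    have hεpos : 0 < ε := div_pos h (by linarith)
    have hyO : (fun i => c i - ε) ∈ O := fun i => by simp [hεpos]
    have hgy : g (fun i => c i - ε) = (∑ i, c i * lam i) - ε * T := by
      rw [hg]
      simp only [sub_mul, Finset.sum_sub_distrib, hT, Finset.mul_sum]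
    have h1 := hgO _ hyO
    rw [hgy] at h1
    have h2 : ε * (T + 1) = ∑ i, c i * lam i := div_mul_cancel₀ _ (by linarith)
    nlinarith
  -- lam ≠ 0
  have hlamne : lam ≠ 0 := by
    intro h0
    have : g (fun i => c i - 1) = 0 := by
      rw [hg]
      simp [h0]
    rw [this] at hwit
    linarith
  -- lam · Jf(xbar) = 0
  have hperp : ∀ v : Fin s → ℝ, ∑ i, lam i * fderiv ℝ (fun y => f y i) xbar v = 0 := by
    intro v
    have := hg0 v
    rw [hg] at this
    rw [← this]
    apply Finset.sum_congr rfl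
    intro i _
    rw [mul_comm]
    rfl
  have hfin := hcrit_unique xbar hxbar lam hlam_nonneg hlamne hperp x hx hne
  have : ∑ i, c i * lam i = (∑ i, lam i * f x i) - ∑ i, lam i * f xbar i := by
    rw [← Finset.sum_sub_distrib]
    apply Finset.sum_congr rfl
    intro i _
    simp [hc]; ring
  linarith
end

section
/- Let f : S → ℝ^n be a strictly invex Fréchet differentiable vector function on an open set S ⊆ ℝ^s. Then for every vector critical point (x̄, λ̄) (λ̄ ≥ 0, λ̄ ≠ 0, λ̄·Jf(x̄) = 0), the point x̄ is the unique global minimizer of x ↦ λ̄·f(x) on S. -/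
/-- If `f` is strictly invex, then every vector critical point is the unique
global solution of the associated weighting problem. -/
theorem strictly_invex_implies_unique_weighting_solution (s n : ℕ)
    (S : Set (Fin s → ℝ)) (hS : IsOpen S) (f : (Fin s → ℝ) → Fin n → ℝ)
    (hdiff : ∀ x ∈ S, ∀ i, DifferentiableAt ℝ (fun y => f y i) x)
    (hstrict : ∀ x ∈ S, ∀ y ∈ S, y ≠ x → ∃ η : Fin s → ℝ,
      ∀ i, fderiv ℝ (fun z => f z i) x η < f y i - f x i)
    (xbar : Fin s → ℝ) (hxbar : xbar ∈ S)
    (lam : Fin n → ℝ) (hlam0 : ∀ i, 0 ≤ lam i) (hlamne : lam ≠ 0)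
    (hcrit : ∀ v : Fin s → ℝ, ∑ i, lam i * fderiv ℝ (fun y => f y i) xbar v = 0) :
    ∀ x ∈ S, x ≠ xbar → ∑ i, lam i * f xbar i < ∑ i, lam i * f x i := by
  intro x hx hne
  obtain ⟨η, hη⟩ := hstrict xbar hxbar x hx hne
  obtain ⟨j, hj⟩ : ∃ j, 0 < lam j := by
    by_contra h
    push_neg at h
    exact hlamne (funext fun i => le_antisymm (h i) (hlam0 i))
  have key : (0:ℝ) < ∑ i, lam i * (f x i - f xbar i) := by
    have h0 := hcrit η
    calc (0:ℝ) = ∑ i, lam i * fderiv ℝ (fun y => f y i) xbar η := h0.symm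
      _ < ∑ i, lam i * (f x i - f xbar i) := by
          apply Finset.sum_lt_sum
          · intro i _
            rcases lt_or_eq_of_le (hlam0 i) with h | h
            · exact le_of_lt (mul_lt_mul_of_pos_left (hη i) h)
            · simp [← h]
          · exact ⟨j, Finset.mem_univ j, mul_lt_mul_of_pos_left (hη j) hj⟩
  have : ∑ i, lam i * (f x i - f xbar i)
      = (∑ i, lam i * f x i) - ∑ i, lam i * f xbar i := by
    rw [← Finset.sum_sub_distrib]; congr 1; ext i; ring
  linarith [this ▸ key]
end

section
/- Let f : S → ℝ^n be Fréchet differentiable on an open set S ⊆ ℝ^s. Then the following are equivalent: (i) for every vector critical point (x̄, λ̄), the point x̄ is a global minimizer of x ↦ λ̄·f(x) on S; (ii) f is invex, i.e., for all x, x̄ ∈ S there exists η ∈ ℝ^s with f(x) − f(x̄) ≥ Jf(x̄)·η componentwise. -/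
open Finset

variable {E : Type*} [NormedAddCommGroup E] [NormedSpace ℝ E] [FiniteDimensional ℝ E]
variable {ι : Type*} [Fintype ι]

/-- The cone of nonnegative combinations of a finite family. -/
def myConeOf (v : ι → E) : Set E :=
  {x | ∃ t : ι → ℝ, (∀ k, 0 ≤ t k) ∧ ∑ k, t k • v k = x}

lemma caratheodory_cone [DecidableEq ι] (v : ι → E) (t : ι → ℝ) (ht : ∀ k, 0 ≤ t k) :
    ∃ (J : Finset ι) (u : ι → ℝ), LinearIndependent ℝ (fun k : J => v k) ∧
      (∀ k, 0 ≤ u k) ∧ (∀ k ∉ J, u k = 0) ∧ ∑ k, u k • v k = ∑ k, t k • v k := by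
  obtain ⟨m, hn⟩ : ∃ m, (univ.filter fun k => t k ≠ 0).card = m := ⟨_, rfl⟩
  induction m using Nat.strong_induction_on generalizing t with
  | _ m ih =>
  set Sp := univ.filter fun k => t k ≠ 0 with hSp
  by_cases hind : LinearIndependent ℝ (fun k : Sp => v k)
  · refine ⟨Sp, t, hind, ht, fun k hk => ?_, rfl⟩
    by_contra h
    exact hk (by simp [hSp, h])
  · rw [Fintype.linearIndependent_iff] at hind
    push_neg at hind
    obtain ⟨g, hg0, j0, hj0⟩ := hind
    -- extend g to a function on ι supported in Sp
    set c₀ : ι → ℝ := fun k => if h : k ∈ Sp then g ⟨k, h⟩ else 0 with hc₀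
    have hc₀supp : ∀ k ∉ Sp, c₀ k = 0 := by intro k hk; simp [hc₀, hk]
    have hc₀sum : ∑ k, c₀ k • v k = 0 := by
      rw [← Finset.sum_subset (Finset.subset_univ Sp)
        (fun k _ hk => by rw [hc₀supp k hk, zero_smul])]
      rw [← Finset.sum_attach Sp (fun k => c₀ k • v k)]
      rw [← hg0]
      exact Finset.sum_congr rfl fun k _ => by simp [hc₀, k.2]
    have hj0' : c₀ (j0 : ι) ≠ 0 := by simpa [hc₀, j0.2] using hj0
    obtain ⟨c, hcsum, hcsupp, k1, hk1⟩ :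
        ∃ c : ι → ℝ, ∑ k, c k • v k = 0 ∧ (∀ k ∉ Sp, c k = 0) ∧ ∃ k, 0 < c k := by
      rcases lt_or_gt_of_ne hj0' with h | h
      · refine ⟨-c₀, by simpa using hc₀sum, fun k hk => by simp [hc₀supp k hk], ⟨j0, ?_⟩⟩
        simpa using h
      · exact ⟨c₀, hc₀sum, hc₀supp, j0, h⟩
    have hk1Sp : (k1 : ι) ∈ Sp := by
      by_contra h; rw [hcsupp k1 h] at hk1; exact lt_irrefl 0 hk1
    set P := Sp.filter fun k => 0 < c k with hP
    have hPne : P.Nonempty := ⟨k1, by simp [hP, hk1Sp, hk1]⟩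
    set r := P.inf' hPne fun k => t k / c k with hr
    obtain ⟨k0, hk0P, hk0⟩ := Finset.exists_mem_eq_inf' hPne fun k => t k / c k
    have hk0c : 0 < c k0 := (Finset.mem_filter.mp hk0P).2
    have hr0 : 0 ≤ r := by
      rw [hr, hk0]; exact div_nonneg (ht k0) hk0c.le
    set t' : ι → ℝ := fun k => t k - r * c k with ht'
    have ht'0 : ∀ k, 0 ≤ t' k := by
      intro k
      rcases le_or_gt (c k) 0 with h | h
      · have : r * c k ≤ 0 := mul_nonpos_of_nonneg_of_nonpos hr0 h
        simp only [ht']; linarith [ht k]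
      · have hkSp : k ∈ Sp := by
          by_contra hk; rw [hcsupp k hk] at h; exact lt_irrefl 0 h
        have hkP : k ∈ P := Finset.mem_filter.mpr ⟨hkSp, h⟩
        have : r ≤ t k / c k := by rw [hr]; exact Finset.inf'_le _ hkP
        have := (le_div_iff₀ h).mp this
        simp only [ht']; linarith
    have ht'k0 : t' k0 = 0 := by
      have hrk : r = t k0 / c k0 := hr.trans hk0
      simp only [ht', hrk, div_mul_cancel₀ (t k0) hk0c.ne', sub_self]
    have hsupp' : (univ.filter fun k => t' k ≠ 0) ⊆ Sp.erase k0 := by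
      intro k hk
      simp only [Finset.mem_filter, Finset.mem_univ, true_and] at hk
      refine Finset.mem_erase.mpr ⟨?_, ?_⟩
      · rintro rfl; exact hk ht'k0
      · by_contra h
        have h1 : t k = 0 := by
          have := Finset.mem_filter.not.mp h; push_neg at this
          simpa using this (Finset.mem_univ k)
        have h2 : c k = 0 := hcsupp k h
        exact hk (by simp [ht', h1, h2])
    have hk0Sp : k0 ∈ Sp := (Finset.mem_filter.mp hk0P).1
    have hcard : (univ.filter fun k => t' k ≠ 0).card < m := by
      calc (univ.filter fun k => t' k ≠ 0).card ≤ (Sp.erase k0).card :=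
            Finset.card_le_card hsupp'
        _ < Sp.card := Finset.card_erase_lt_of_mem hk0Sp
        _ = m := hn
    have hsum' : ∑ k, t' k • v k = ∑ k, t k • v k := by
      simp only [ht', sub_smul, Finset.sum_sub_distrib, mul_smul]
      rw [← Finset.smul_sum, hcsum, smul_zero, sub_zero]
    obtain ⟨J, u, h1, h2, h3, h4⟩ := ih _ hcard t' ht'0 rfl
    exact ⟨J, u, h1, h2, h3, h4.trans hsum'⟩

lemma sum_extend_dite [DecidableEq ι] (v : ι → E) (J : Finset ι) (u : {x // x ∈ J} → ℝ) :
    ∑ k : ι, (if h : k ∈ J then u ⟨k, h⟩ else 0) • v k = ∑ k : {x // x ∈ J}, u k • v k := by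
  rw [← Finset.sum_subset (Finset.subset_univ J)
    (fun k _ hk => by rw [dif_neg hk, zero_smul])]
  rw [← Finset.sum_attach J (fun k => (if h : k ∈ J then u ⟨k, h⟩ else 0) • v k)]
  exact Finset.sum_congr rfl fun k _ => by rw [dif_pos k.2]

lemma myConeOf_isClosed (v : ι → E) : IsClosed (myConeOf v) := by
  classical
  have key : myConeOf v = ⋃ (J : Finset ι) (_ : LinearIndependent ℝ (fun k : J => v k)),
      (fun u : {x // x ∈ J} → ℝ => ∑ k : {x // x ∈ J}, u k • v k) ''
        {u | ∀ k, 0 ≤ u k} := by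
    ext x
    constructor
    · rintro ⟨t, ht, rfl⟩
      obtain ⟨J, u, hli, hu0, husupp, hsum⟩ := caratheodory_cone v t ht
      refine Set.mem_iUnion.mpr ⟨J, Set.mem_iUnion.mpr ⟨hli, ⟨fun k => u k, fun k => hu0 k, ?_⟩⟩⟩
      show ∑ k : {x // x ∈ J}, u (k : ι) • v k = ∑ k : ι, t k • v k
      rw [← hsum, ← sum_extend_dite v J (fun k => u (k : ι))]
      exact Finset.sum_congr rfl fun k _ => by
        by_cases h : k ∈ J
        · rw [dif_pos h]
        · rw [dif_neg h, husupp k h, zero_smul]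
    · intro hx
      obtain ⟨J, hJ⟩ := Set.mem_iUnion.mp hx
      obtain ⟨hli, u, hu0, rfl⟩ := Set.mem_iUnion.mp hJ
      exact ⟨fun k => if h : k ∈ J then u ⟨k, h⟩ else 0,
        fun k => by
          by_cases h : k ∈ J
          · simpa [h] using hu0 ⟨k, h⟩
          · simp [h],
        sum_extend_dite v J u⟩
  rw [key]
  refine isClosed_iUnion_of_finite fun J => isClosed_iUnion_of_finite fun hli => ?_
  have hker : LinearMap.ker
      ({ toFun := fun u : {x // x ∈ J} → ℝ => ∑ k : {x // x ∈ J}, u k • v k,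
         map_add' := fun a b => by simp [add_smul, Finset.sum_add_distrib],
         map_smul' := fun c a => by simp [mul_smul, Finset.smul_sum] } :
       ({x // x ∈ J} → ℝ) →ₗ[ℝ] E) = ⊥ := by
    rw [LinearMap.ker_eq_bot']
    intro u hu
    funext k
    exact Fintype.linearIndependent_iff.mp hli u hu k
  have := (LinearMap.isClosedEmbedding_of_injective hker).isClosedMap
  have hcl : IsClosed {u : {x // x ∈ J} → ℝ | ∀ k, 0 ≤ u k} := by
    have : {u : {x // x ∈ J} → ℝ | ∀ k, 0 ≤ u k} = ⋂ k, {u | 0 ≤ u k} := by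
      ext u; simp [Set.mem_iInter]
    rw [this]
    exact isClosed_iInter fun k => isClosed_le continuous_const (continuous_apply k)
  exact this _ hcl

lemma clm_eq_sum_single {s : ℕ} (ℓ : (Fin s → ℝ) →L[ℝ] ℝ) (η : Fin s → ℝ) :
    ℓ η = ∑ j, η j * ℓ (Pi.single j 1) := by
  have hη : η = ∑ j, η j • (Pi.single j 1 : Fin s → ℝ) := by
    have := Finset.univ_sum_single η
    rw [← this]
    exact Finset.sum_congr rfl fun j _ => by
      funext i
      by_cases h : i = j <;> simp [Pi.single_apply, h]
  conv_lhs => rw [hη]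
  rw [map_sum]
  exact Finset.sum_congr rfl fun j _ => by rw [map_smul, smul_eq_mul]

lemma farkas_alt {s n : ℕ} (L : Fin n → ((Fin s → ℝ) →L[ℝ] ℝ)) (b : Fin n → ℝ) :
    (∃ η : Fin s → ℝ, ∀ i, L i η ≤ b i) ∨
    (∃ lam : Fin n → ℝ, (∀ i, 0 ≤ lam i) ∧ lam ≠ 0 ∧
      (∀ η, ∑ i, lam i * L i η = 0) ∧ ∑ i, lam i * b i < 0) := by
  classical
  set e := WithLp.linearEquiv 2 ℝ (Fin n → ℝ) with he
  set colv : Fin s → (Fin n → ℝ) := fun j i => L i (Pi.single j 1) with hcolv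
  set v0 : (Fin s ⊕ Fin s) ⊕ Fin n → (Fin n → ℝ) :=
    Sum.elim (Sum.elim colv fun j => -colv j) (fun i => Pi.single i 1) with hv0
  set v : (Fin s ⊕ Fin s) ⊕ Fin n → EuclideanSpace ℝ (Fin n) :=
    fun k => e.symm (v0 k) with hv
  have hev : ∀ k, e (v k) = v0 k := fun k => e.apply_symm_apply _
  -- component formula for sums
  have hcomp : ∀ (t : ((Fin s ⊕ Fin s) ⊕ Fin n) → ℝ) (i : Fin n),
      e (∑ k, t k • v k) i = ∑ k, t k * v0 k i := by
    intro t i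
    rw [map_sum]
    simp only [map_smul, hev]
    rw [Finset.sum_apply]
    simp [smul_eq_mul]
  -- A η is in the cone
  have hasub : ∀ η : Fin s → ℝ, e.symm (fun i => L i η) ∈ myConeOf v := by
    intro η
    refine ⟨Sum.elim (Sum.elim (fun j => max (η j) 0) fun j => max (-η j) 0) fun _ => 0,
      fun k => by rcases k with (j | j) | i <;> simp [le_max_right], ?_⟩
    apply e.injective
    rw [e.apply_symm_apply]
    funext i
    rw [hcomp]
    rw [Fintype.sum_sum_type, Fintype.sum_sum_type]
    simp only [Sum.elim_inl, Sum.elim_inr, hv0, hcolv, Pi.neg_apply, zero_mul,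
      Finset.sum_const_zero, add_zero, mul_neg]
    rw [← Finset.sum_add_distrib]
    rw [clm_eq_sum_single (L i) η]
    exact Finset.sum_congr rfl fun j _ => by
      rw [← neg_mul, ← add_mul, ← sub_eq_add_neg, max_zero_sub_max_neg_zero_eq_self]
  by_cases hb : e.symm b ∈ myConeOf v
  · left
    obtain ⟨t, ht0, hsum⟩ := hb
    refine ⟨fun j => t (.inl (.inl j)) - t (.inl (.inr j)), fun i => ?_⟩
    have hbi : b i = ∑ k, t k * v0 k i := by
      rw [← hcomp t i, hsum, e.apply_symm_apply]
    rw [clm_eq_sum_single (L i)]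
    rw [hbi, Fintype.sum_sum_type, Fintype.sum_sum_type]
    simp only [Sum.elim_inl, Sum.elim_inr, hv0, hcolv, Pi.neg_apply, mul_neg,
      Pi.single_apply, mul_ite, mul_one, mul_zero, Finset.sum_ite_eq, Finset.mem_univ,
      if_true]
    have heq : ∑ j, (fun j => t (.inl (.inl j)) - t (.inl (.inr j))) j *
          (L i) (Pi.single j 1)
        = ∑ j, (t (.inl (.inl j)) * (L i) (Pi.single j 1) +
            -(t (.inl (.inr j)) * (L i) (Pi.single j 1))) :=
      Finset.sum_congr rfl fun j _ => by ring
    rw [heq, Finset.sum_add_distrib]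
    have h0 : 0 ≤ t (.inr i) := ht0 (.inr i)
    linarith
  · right
    set K : ConvexCone ℝ (EuclideanSpace ℝ (Fin n)) :=
      { carrier := myConeOf v
        smul_mem' := by
          rintro c hc x ⟨t, ht, rfl⟩
          exact ⟨fun k => c * t k, fun k => mul_nonneg hc.le (ht k), by
            simp [mul_smul, ← Finset.smul_sum]⟩
        add_mem' := by
          rintro x ⟨t, ht, rfl⟩ y ⟨u, hu, rfl⟩
          exact ⟨t + u, fun k => add_nonneg (ht k) (hu k), by
            simp [add_smul, Finset.sum_add_distrib]⟩ } with hK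
    have hKne : (K : Set (EuclideanSpace ℝ (Fin n))).Nonempty :=
      ⟨0, ⟨fun _ => 0, fun _ => le_refl 0, by simp⟩⟩
    have hKcl : IsClosed (K : Set (EuclideanSpace ℝ (Fin n))) := myConeOf_isClosed v
    obtain ⟨y, hy, hyb⟩ :=
      ProperCone.hyperplane_separation' (E := EuclideanSpace ℝ (Fin n))
        ({ carrier := myConeOf v
           add_mem' := fun hx hy => K.add_mem hx hy
           zero_mem' := ⟨fun _ => 0, fun _ => le_refl 0, by simp⟩
           smul_mem' := fun c x hx => by
             rcases c with ⟨c, hc⟩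
             rcases hc.eq_or_lt with h | h
             · subst h
               exact ⟨fun _ => 0, fun _ => le_refl 0, by simp⟩
             · exact K.smul_mem h hx
           isClosed' := hKcl } : ProperCone ℝ (EuclideanSpace ℝ (Fin n))) hb
    set lam : Fin n → ℝ := e y with hlam
    have hinner : ∀ x : EuclideanSpace ℝ (Fin n), (inner ℝ x y : ℝ) = ∑ i, e x i * lam i := by
      intro x
      rw [PiLp.inner_apply]
      exact Finset.sum_congr rfl fun i _ => by
        simp [RCLike.inner_apply, conj_trivial]; exact mul_comm _ _
    refine ⟨lam, ?_, ?_, ?_, ?_⟩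
    · intro i
      have hmem : v (.inr i) ∈ K := ⟨Pi.single (.inr i) 1,
        fun k => by by_cases h : k = .inr i <;> simp [Pi.single_apply, h], by
          simp [Pi.single_apply, ite_smul]⟩
      have := hy _ hmem
      rw [hinner] at this
      simpa [hev, hv0, Pi.single_apply, ite_mul, mul_ite] using this
    · intro h0
      have : y = 0 := by
        apply e.injective
        simp [← hlam, h0]
      rw [this] at hyb
      simp at hyb
    · intro η
      have h1 := hy _ (hasub η)
      have h2 := hy _ (hasub (-η))
      rw [hinner] at h1 h2
      rw [e.apply_symm_apply] at h1 h2
      simp only [map_neg, Pi.neg_apply, neg_mul] at h2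
      have h2' : ∑ i, L i η * lam i ≤ 0 := by
        rw [Finset.sum_neg_distrib] at h2
        linarith
      have : ∑ i, L i η * lam i = 0 := le_antisymm h2' h1
      rw [← this]
      exact Finset.sum_congr rfl fun i _ => mul_comm _ _
    · have := hyb
      rw [hinner, e.apply_symm_apply] at this
      calc ∑ i, lam i * b i = ∑ i, b i * lam i :=
            Finset.sum_congr rfl fun i _ => mul_comm _ _
        _ < 0 := this



/-- Corrected Theorem 2.4: every vector critical point globally solves its
weighting problem iff `f` is invex. -/
theorem critical_points_solve_weighting_iff_invex (s n : ℕ)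
    (S : Set (Fin s → ℝ)) (hS : IsOpen S) (f : (Fin s → ℝ) → Fin n → ℝ)
    (hdiff : ∀ x ∈ S, ∀ i, DifferentiableAt ℝ (fun y => f y i) x) :
    (∀ xbar ∈ S, ∀ lam : Fin n → ℝ,
      (∀ i, 0 ≤ lam i) → lam ≠ 0 →
      (∀ v : Fin s → ℝ, ∑ i, lam i * fderiv ℝ (fun y => f y i) xbar v = 0) →
      ∀ x ∈ S, ∑ i, lam i * f xbar i ≤ ∑ i, lam i * f x i)
    ↔
    (∀ x ∈ S, ∀ xbar ∈ S, ∃ η : Fin s → ℝ,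
      ∀ i, fderiv ℝ (fun z => f z i) xbar η ≤ f x i - f xbar i) := by
  constructor
  · intro H x hx xbar hxbar
    rcases farkas_alt (fun i => fderiv ℝ (fun y => f y i) xbar)
        (fun i => f x i - f xbar i) with ⟨η, hη⟩ | ⟨lam, h0, hne, hcrit, hneg⟩
    · exact ⟨η, hη⟩
    · exfalso
      have := H xbar hxbar lam h0 hne hcrit x hx
      have hge : 0 ≤ ∑ i, lam i * (f x i - f xbar i) := by
        have : ∑ i, lam i * (f x i - f xbar i)
            = ∑ i, lam i * f x i - ∑ i, lam i * f xbar i := by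
          rw [← Finset.sum_sub_distrib]
          exact Finset.sum_congr rfl fun i _ => by ring
        linarith [this]
      linarith [hneg]
  · intro hinvex xbar hxbar lam h0 hne hcrit x hx
    obtain ⟨η, hη⟩ := hinvex x hx xbar hxbar
    have hterm : ∀ i, lam i * fderiv ℝ (fun y => f y i) xbar η
        ≤ lam i * (f x i - f xbar i) :=
      fun i => mul_le_mul_of_nonneg_left (hη i) (h0 i)
    have hsum : ∑ i, lam i * fderiv ℝ (fun y => f y i) xbar η
        ≤ ∑ i, lam i * (f x i - f xbar i) :=
      Finset.sum_le_sum fun i _ => hterm i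
    rw [hcrit η] at hsum
    have : ∑ i, lam i * (f x i - f xbar i)
        = ∑ i, lam i * f x i - ∑ i, lam i * f xbar i := by
      rw [← Finset.sum_sub_distrib]
      exact Finset.sum_congr rfl fun i _ => by ring
    linarith
end

section
/- Let f : S → ℝ^n be Fréchet differentiable on an open set S, and suppose every vector critical point (x̄, λ̄) makes x̄ a global minimizer of λ̄·f on S. Then for all x, x̄ ∈ S, the linear system Jf(x̄)·η ≤ f(x) − f(x̄) (componentwise) has a solution η ∈ ℝ^s. -/
open Finset
open scoped InnerProductSpace

section Aux

variable {E : Type*} [NormedAddCommGroup E] [NormedSpace ℝ E]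

lemma cone_caratheodory {ι : Type*} [Fintype ι] [DecidableEq ι] (v : ι → E) :
    ∀ (N : ℕ) (u : Finset ι), u.card ≤ N → ∀ c : ι → ℝ, (∀ i, 0 ≤ c i) →
      ∃ t : Finset ι, t ⊆ u ∧ LinearIndependent ℝ (fun i : t => v i) ∧
        ∃ d : ι → ℝ, (∀ i, 0 ≤ d i) ∧ ∑ i ∈ t, d i • v i = ∑ i ∈ u, c i • v i := by
  intro N
  induction N with
  | zero =>
    intro u hu c _
    have : u = ∅ := Finset.card_eq_zero.mp (Nat.le_zero.mp hu)
    subst this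
    refine ⟨∅, subset_rfl, ?_, 0, fun i => le_rfl, by simp⟩
    exact linearIndependent_empty_type
  | succ N ih =>
    intro u hu c hc
    by_cases hli : LinearIndependent ℝ (fun i : u => v i)
    · exact ⟨u, subset_rfl, hli, c, hc, rfl⟩
    · obtain ⟨g, hgsum, i₁, hgi₁⟩ := Fintype.not_linearIndependent_iff.mp hli
      -- extend g to ι
      set g' : ι → ℝ := fun i => if h : i ∈ u then g ⟨i, h⟩ else 0 with hg'
      have hg'sum : ∑ i ∈ u, g' i • v i = 0 := by
        rw [← hgsum, ← Finset.sum_coe_sort u (fun i => g' i • v i)]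
        refine Finset.sum_congr rfl fun i _ => ?_
        simp [g', i.2]
      have hg'i₁ : g' (i₁ : ι) ≠ 0 := by simpa [g', i₁.2] using hgi₁
      -- WLOG some positive entry
      obtain ⟨G, hGsum, hGout, i₂, hi₂u, hi₂pos⟩ :
          ∃ G : ι → ℝ, ∑ i ∈ u, G i • v i = 0 ∧ (∀ i, i ∉ u → G i = 0) ∧
            ∃ i₂, i₂ ∈ u ∧ 0 < G i₂ := by
        rcases lt_or_gt_of_ne hg'i₁ with h | h
        · refine ⟨-g', by simpa using hg'sum, ?_, i₁, i₁.2, by simpa using h⟩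
          intro i hi; simp [g', hi]
        · exact ⟨g', hg'sum, fun i hi => by simp [g', hi], i₁, i₁.2, h⟩
      set P := u.filter (fun i => 0 < G i) with hP
      have hPne : P.Nonempty := ⟨i₂, Finset.mem_filter.mpr ⟨hi₂u, hi₂pos⟩⟩
      obtain ⟨i₀, hi₀P, hmin⟩ := P.exists_min_image (fun i => c i / G i) hPne
      have hi₀u : i₀ ∈ u := (Finset.mem_filter.mp hi₀P).1
      have hGi₀ : 0 < G i₀ := (Finset.mem_filter.mp hi₀P).2
      set tm := c i₀ / G i₀ with htm
      have htm0 : 0 ≤ tm := div_nonneg (hc i₀) hGi₀.le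
      set d : ι → ℝ := fun i => c i - tm * G i with hd
      have hd0 : ∀ i, 0 ≤ d i := by
        intro i
        by_cases hiP : i ∈ P
        · have hGi : 0 < G i := (Finset.mem_filter.mp hiP).2
          have := hmin i hiP
          have : tm * G i ≤ c i := by
            rw [htm]
            calc c i₀ / G i₀ * G i ≤ c i / G i * G i := by
                  exact mul_le_mul_of_nonneg_right this hGi.le
              _ = c i := div_mul_cancel₀ _ hGi.ne'
          simpa [d] using sub_nonneg.mpr this
        · have hGi : G i ≤ 0 := by
            by_cases hiu : i ∈ u
            · by_contra h
              exact hiP (Finset.mem_filter.mpr ⟨hiu, lt_of_not_ge h⟩)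
            · simp [hGout i hiu]
          have : tm * G i ≤ 0 := mul_nonpos_of_nonneg_of_nonpos htm0 hGi
          have := sub_nonneg.mpr (this.trans (hc i))
          simpa [d] using this
      have hdi₀ : d i₀ = 0 := by
        simp only [d, tm]
        field_simp
        ring
      have hsum : ∑ i ∈ u.erase i₀, d i • v i = ∑ i ∈ u, c i • v i := by
        rw [Finset.sum_erase _ (by rw [hdi₀]; exact zero_smul ℝ _)]
        simp only [d, sub_smul, mul_smul, Finset.sum_sub_distrib, ← Finset.smul_sum, hGsum,
          smul_zero, sub_zero]
      have hcard : (u.erase i₀).card ≤ N := by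
        have := Finset.card_erase_of_mem hi₀u
        omega
      obtain ⟨t, hts, hlit, d', hd', hsum'⟩ := ih (u.erase i₀) hcard d hd0
      exact ⟨t, hts.trans (Finset.erase_subset _ _), hlit, d', hd', by rw [hsum', hsum]⟩

lemma cone_isClosed_of_li {ι : Type*} [Fintype ι] [FiniteDimensional ℝ E] {w : ι → E}
    (hw : LinearIndependent ℝ w) :
    IsClosed {x : E | ∃ c : ι → ℝ, (∀ i, 0 ≤ c i) ∧ x = ∑ i, c i • w i} := by
  classical
  let L : (ι → ℝ) →ₗ[ℝ] E :=
    { toFun := fun c => ∑ i, c i • w i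
      map_add' := by intro a b; simp [add_smul, Finset.sum_add_distrib]
      map_smul' := by intro m a; simp [smul_smul, Finset.smul_sum] }
  have hker : LinearMap.ker L = ⊥ := by
    rw [LinearMap.ker_eq_bot']
    intro c hc
    exact funext (Fintype.linearIndependent_iff.mp hw c hc)
  have hce := L.isClosedEmbedding_of_injective hker
  have hset : {x : E | ∃ c : ι → ℝ, (∀ i, 0 ≤ c i) ∧ x = ∑ i, c i • w i}
      = L '' {c | ∀ i, 0 ≤ c i} := by
    ext x
    constructor
    · rintro ⟨c, hc, rfl⟩; exact ⟨c, hc, rfl⟩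
    · rintro ⟨c, hc, rfl⟩; exact ⟨c, hc, rfl⟩
  have hcl : IsClosed {c : ι → ℝ | ∀ i, 0 ≤ c i} := by
    have : {c : ι → ℝ | ∀ i, 0 ≤ c i} = ⋂ i, {c : ι → ℝ | 0 ≤ c i} := by
      ext c; simp [Set.mem_iInter]
    rw [this]
    exact isClosed_iInter fun i => isClosed_le continuous_const (continuous_apply i)
  rw [hset]
  exact hce.isClosedMap _ hcl

lemma cone_isClosed {ι : Type*} [Fintype ι] [FiniteDimensional ℝ E] (v : ι → E) :
    IsClosed {x : E | ∃ c : ι → ℝ, (∀ i, 0 ≤ c i) ∧ x = ∑ i, c i • v i} := by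
  classical
  set T : Finset ι → Set E := fun t =>
    {x : E | LinearIndependent ℝ (fun i : t => v i) ∧
      ∃ c : ι → ℝ, (∀ i, 0 ≤ c i) ∧ x = ∑ i ∈ t, c i • v i} with hT
  have hTclosed : ∀ t, IsClosed (T t) := by
    intro t
    by_cases h : LinearIndependent ℝ (fun i : t => v i)
    · have he : T t = {x : E | ∃ c : ↥t → ℝ, (∀ i, 0 ≤ c i) ∧ x = ∑ i, c i • v i} := by
        ext x
        simp only [hT, Set.mem_setOf_eq, h, true_and]
        constructor
        · rintro ⟨c, hc, rfl⟩
          exact ⟨fun i => c i, fun i => hc i, (Finset.sum_coe_sort t (fun i => c i • v i)).symm⟩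
        · rintro ⟨c, hc, rfl⟩
          refine ⟨fun i => if hi : i ∈ t then c ⟨i, hi⟩ else 0, ?_, ?_⟩
          · intro i; by_cases hi : i ∈ t <;> simp [hi, hc]
          · rw [← Finset.sum_coe_sort t]
            exact Finset.sum_congr rfl fun i _ => by simp [i.2]
      rw [he]
      exact cone_isClosed_of_li h
    · have : T t = ∅ := by ext x; simp [hT, h]
      rw [this]; exact isClosed_empty
  have hunion : {x : E | ∃ c : ι → ℝ, (∀ i, 0 ≤ c i) ∧ x = ∑ i, c i • v i} = ⋃ t, T t := by
    ext x
    simp only [Set.mem_setOf_eq, Set.mem_iUnion, hT]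
    constructor
    · rintro ⟨c, hc, rfl⟩
      obtain ⟨t, -, hli, d, hd, hsum⟩ :=
        cone_caratheodory v (Finset.univ.card) Finset.univ le_rfl c hc
      exact ⟨t, hli, d, hd, hsum.symm⟩
    · rintro ⟨t, hli, c, hc, rfl⟩
      refine ⟨fun i => if i ∈ t then c i else 0, fun i => by by_cases hi : i ∈ t <;> simp [hi, hc],
        ?_⟩
      rw [← Finset.sum_subset (Finset.subset_univ t) (fun i _ hi => by simp [hi])]
      exact Finset.sum_congr rfl fun i hi => by simp [hi]
  rw [hunion]
  exact isClosed_iUnion_of_finite hTclosed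

end Aux

lemma farkas_cone {ι : Type*} [Fintype ι] {E : Type*} [NormedAddCommGroup E]
    [InnerProductSpace ℝ E] [FiniteDimensional ℝ E] (v : ι → E) (b : E)
    (h : ∀ y : E, (∀ i, 0 ≤ ⟪v i, y⟫_ℝ) → 0 ≤ ⟪b, y⟫_ℝ) :
    ∃ c : ι → ℝ, (∀ i, 0 ≤ c i) ∧ b = ∑ i, c i • v i := by
  by_contra hb
  push_neg at hb
  let K : ConvexCone ℝ E :=
    { carrier := {x : E | ∃ c : ι → ℝ, (∀ i, 0 ≤ c i) ∧ x = ∑ i, c i • v i}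
      smul_mem' := by
        rintro r hr x ⟨c, hc, rfl⟩
        exact ⟨fun i => r * c i, fun i => mul_nonneg hr.le (hc i), by
          simp [Finset.smul_sum, mul_smul]⟩
      add_mem' := by
        rintro x ⟨c, hc, rfl⟩ y ⟨d, hd, rfl⟩
        exact ⟨fun i => c i + d i, fun i => add_nonneg (hc i) (hd i), by
          simp [add_smul, Finset.sum_add_distrib]⟩ }
  have hKne : (K : Set E).Nonempty := ⟨0, 0, fun i => le_rfl, by simp⟩
  have hKc : IsClosed (K : Set E) := cone_isClosed v
  have hbK : b ∉ K := by
    rintro ⟨c, hc, rfl⟩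
    exact (hb c hc) rfl
  obtain ⟨y, hy1, hy2⟩ : ∃ y : E, (∀ x ∈ K, 0 ≤ ⟪x, y⟫_ℝ) ∧ ⟪y, b⟫_ℝ < 0 := by
    have hKp : K.Pointed := ⟨fun i => 0, fun i => le_rfl, by simp⟩
    let C : ProperCone ℝ E := ⟨K.toPointedCone hKp, hKc⟩
    obtain ⟨y, h1, h2⟩ := ProperCone.hyperplane_separation' (x₀ := b) C hbK
    exact ⟨y, fun x hx => h1 x hx, by rwa [real_inner_comm]⟩
  classical
  have hvy : ∀ i, 0 ≤ ⟪v i, y⟫_ℝ := by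
    intro i
    refine hy1 _ ⟨Pi.single i 1, ?_, ?_⟩
    · intro j
      by_cases hj : j = i <;> simp [Pi.single_apply, hj]
    · rw [Finset.sum_eq_single i (fun j _ hj => by simp [Pi.single_apply, hj]) (by simp)]
      simp
  have := h y hvy
  rw [real_inner_comm] at hy2
  linarith

/-- If every vector critical point globally solves its weighting problem, then
the linearized system `Jf(x̄)·η ≤ f(x) − f(x̄)` is solvable for all `x, x̄ ∈ S`. -/
theorem weighting_solutions_imply_linear_system_solvable (s n : ℕ)
    (S : Set (Fin s → ℝ)) (hS : IsOpen S) (f : (Fin s → ℝ) → Fin n → ℝ)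
    (hdiff : ∀ x ∈ S, ∀ i, DifferentiableAt ℝ (fun y => f y i) x)
    (hcrit : ∀ xbar ∈ S, ∀ lam : Fin n → ℝ,
      (∀ i, 0 ≤ lam i) → lam ≠ 0 →
      (∀ v : Fin s → ℝ, ∑ i, lam i * fderiv ℝ (fun y => f y i) xbar v = 0) →
      ∀ x ∈ S, ∑ i, lam i * f xbar i ≤ ∑ i, lam i * f x i) :
    ∀ x ∈ S, ∀ xbar ∈ S, ∃ η : Fin s → ℝ,
      ∀ i, fderiv ℝ (fun z => f z i) xbar η ≤ f x i - f xbar i := by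
  classical
  intro x hx xbar hxbar
  set D : Fin n → (Fin s → ℝ) →L[ℝ] ℝ := fun i => fderiv ℝ (fun y => f y i) xbar with hD
  set LE := WithLp.linearEquiv 2 ℝ (Fin n → ℝ) with hLE
  set toE : (Fin n → ℝ) → EuclideanSpace ℝ (Fin n) := fun w => LE.symm w with htoE
  set v : (Fin s ⊕ Fin s) ⊕ Fin n → EuclideanSpace ℝ (Fin n) := fun q =>
    match q with
    | .inl (.inl j) => toE (fun i => D i (Pi.single j 1))
    | .inl (.inr j) => -toE (fun i => D i (Pi.single j 1))
    | .inr k => toE (Pi.single k 1) with hv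
  have key : ∀ (w : Fin n → ℝ) (y : EuclideanSpace ℝ (Fin n)),
      ⟪toE w, y⟫_ℝ = ∑ i, w i * y i := by
    intro w y
    simp [htoE, hLE, PiLp.inner_apply, RCLike.inner_apply]
    exact Finset.sum_congr rfl fun i _ => mul_comm _ _
  have hDw : ∀ (i : Fin n) (w : Fin s → ℝ), D i w = ∑ j, w j * D i (Pi.single j 1) := by
    intro i w
    have hw : w = ∑ j, Pi.single j (w j) := (Finset.univ_sum_single w).symm
    conv_lhs => rw [hw]
    rw [map_sum]
    refine Finset.sum_congr rfl fun j _ => ?_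
    have h1 : Pi.single j (w j) = w j • (Pi.single j 1 : Fin s → ℝ) := by
      funext k; by_cases h : k = j <;> simp [Pi.single_apply, h]
    rw [h1, map_smul]
    simp [mul_comm]
  have hdual : ∀ y : EuclideanSpace ℝ (Fin n),
      (∀ q, 0 ≤ ⟪v q, y⟫_ℝ) → 0 ≤ ⟪toE (fun i => f x i - f xbar i), y⟫_ℝ := by
    intro y hy
    set lam : Fin n → ℝ := fun i => y i with hlam
    have hlam0 : ∀ i, 0 ≤ lam i := by
      intro i
      have := hy (.inr i)
      rw [show v (.inr i) = toE (Pi.single i 1) from rfl, key] at this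
      simpa [Pi.single_apply] using this
    have horthj : ∀ j : Fin s, ∑ i, D i (Pi.single j 1) * lam i = 0 := by
      intro j
      have h1 := hy (.inl (.inl j))
      have h2 := hy (.inl (.inr j))
      rw [show v (.inl (.inl j)) = toE (fun i => D i (Pi.single j 1)) from rfl, key] at h1
      rw [show v (.inl (.inr j)) = -toE (fun i => D i (Pi.single j 1)) from rfl,
        inner_neg_left, key] at h2
      have : ∑ i, D i (Pi.single j 1) * y i ≤ 0 := by linarith
      exact le_antisymm this h1
    have horth : ∀ w : Fin s → ℝ, ∑ i, lam i * D i w = 0 := by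
      intro w
      calc ∑ i, lam i * D i w = ∑ i, ∑ j, w j * (D i (Pi.single j 1) * lam i) := by
            refine Finset.sum_congr rfl fun i _ => ?_
            rw [hDw i w, Finset.mul_sum]
            refine Finset.sum_congr rfl fun j _ => by ring
        _ = ∑ j, w j * ∑ i, D i (Pi.single j 1) * lam i := by
            rw [Finset.sum_comm]
            exact Finset.sum_congr rfl fun j _ => by rw [Finset.mul_sum]
        _ = 0 := by simp [horthj]
    rw [key]
    by_cases hne : lam = 0
    · have hy0 : ∀ i, y i = (0 : ℝ) := fun i => congrFun hne i
      refine le_of_eq (Finset.sum_eq_zero fun i _ => by rw [hy0 i, mul_zero]).symm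
    · have := hcrit xbar hxbar lam hlam0 hne (fun w => horth w) x hx
      have heq : ∑ i, (f x i - f xbar i) * y i
          = ∑ i, lam i * f x i - ∑ i, lam i * f xbar i := by
        rw [← Finset.sum_sub_distrib]
        exact Finset.sum_congr rfl fun i _ => by simp [hlam]; ring
      linarith
  obtain ⟨c, hc, hbc⟩ := farkas_cone v (toE (fun i => f x i - f xbar i)) hdual
  set η : Fin s → ℝ := fun j => c (.inl (.inl j)) - c (.inl (.inr j)) with hη
  refine ⟨η, fun i => ?_⟩
  have hLEeq := congrArg LE hbc
  rw [map_sum] at hLEeq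
  simp only [map_smul] at hLEeq
  have hcoord := congrFun hLEeq i
  rw [Finset.sum_apply] at hcoord
  have hLEtoE : ∀ w : Fin n → ℝ, LE (toE w) = w := fun w => LE.apply_symm_apply w
  have e1 : ∀ j, (c (.inl (.inl j)) • LE (v (.inl (.inl j)))) i
      = c (.inl (.inl j)) * D i (Pi.single j 1) := by
    intro j
    have h2 : LE (v (.inl (.inl j))) = fun i => D i (Pi.single j 1) := hLEtoE _
    rw [h2]
    simp
  have e2 : ∀ j, (c (.inl (.inr j)) • LE (v (.inl (.inr j)))) i
      = -(c (.inl (.inr j)) * D i (Pi.single j 1)) := by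
    intro j
    have h2 : LE (v (.inl (.inr j))) = -(fun i => D i (Pi.single j 1)) := by
      rw [show v (.inl (.inr j)) = -toE (fun i => D i (Pi.single j 1)) from rfl, map_neg,
        hLEtoE]
    rw [h2]
    simp
  have e3 : ∀ k, (c (.inr k) • LE (v (.inr k))) i = c (.inr k) * (Pi.single k 1 : Fin n → ℝ) i := by
    intro k
    have h2 : LE (v (.inr k)) = Pi.single k 1 := hLEtoE _
    rw [h2]
    simp
  rw [Fintype.sum_sum_type, Fintype.sum_sum_type] at hcoord
  simp only [e1, e2, e3] at hcoord
  have e4 : ∑ k, c (.inr k) * (Pi.single k 1 : Fin n → ℝ) i = c (.inr i) := by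
    rw [Finset.sum_eq_single i (fun k _ hk => by simp [Pi.single_apply, hk]) (by simp)]
    simp
  rw [e4] at hcoord
  have e5 : D i η = ∑ j, c (.inl (.inl j)) * D i (Pi.single j 1)
      - ∑ j, c (.inl (.inr j)) * D i (Pi.single j 1) := by
    rw [hDw i η, ← Finset.sum_sub_distrib]
    refine Finset.sum_congr rfl fun j _ => by rw [hη]; ring
  have h6 := hc (.inr i)
  show D i η ≤ f x i - f xbar i
  simp only [hLEtoE] at hcoord
  rw [Finset.sum_neg_distrib] at hcoord
  rw [e5]
  linarith
end

section
/- Let (P) with S = {x ∈ X : g(x) ≤ 0} (X ⊆ ℝ^s open, f : X → ℝ^n, g : X → ℝ^m Fréchet differentiable) be strictly KT-invex. If x̄ ∈ S is a Kuhn-Tucker stationary point with multipliers λ̄ ≥ 0, λ̄ ≠ 0, μ̄ ≥ 0 satisfying μ̄ᵢgᵢ(x̄) = 0 for all i and Σλ̄ᵢ∇fᵢ(x̄) + Σ_{i∈I(x̄)} μ̄ᵢ∇gᵢ(x̄) = 0, then x̄ is the unique global minimizer of x ↦ λ̄·f(x) on S. -/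
/-- Strict KT-invexity implies every Kuhn-Tucker stationary point is the unique
global solution of its weighting problem. -/
theorem strict_KT_invex_implies_unique_weighting_solution (s n m : ℕ)
    (X : Set (Fin s → ℝ)) (hX : IsOpen X)
    (f : (Fin s → ℝ) → Fin n → ℝ) (g : (Fin s → ℝ) → Fin m → ℝ)
    (hdf : ∀ x ∈ X, ∀ i, DifferentiableAt ℝ (fun y => f y i) x)
    (hdg : ∀ x ∈ X, ∀ j, DifferentiableAt ℝ (fun y => g y j) x)
    (S : Set (Fin s → ℝ)) (hS : S = {x ∈ X | ∀ j, g x j ≤ 0})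
    (hstrictKT : ∃ η : (Fin s → ℝ) → (Fin s → ℝ) → (Fin s → ℝ),
      ∀ x ∈ S, ∀ y ∈ S, y ≠ x →
        (∀ i, fderiv ℝ (fun z => f z i) x (η x y) < f y i - f x i) ∧
        (∀ j, g x j = 0 → fderiv ℝ (fun z => g z j) x (η x y) ≤ 0))
    (xbar : Fin s → ℝ) (hxbar : xbar ∈ S)
    (lam : Fin n → ℝ) (mu : Fin m → ℝ)
    (hlam0 : ∀ i, 0 ≤ lam i) (hlamne : lam ≠ 0) (hmu0 : ∀ j, 0 ≤ mu j)
    (hcs : ∀ j, mu j * g xbar j = 0)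
    (hstat : ∀ v : Fin s → ℝ,
      ∑ i, lam i * fderiv ℝ (fun y => f y i) xbar v +
      ∑ j, mu j * fderiv ℝ (fun y => g y j) xbar v = 0) :
    ∀ x ∈ S, x ≠ xbar → ∑ i, lam i * f xbar i < ∑ i, lam i * f x i := by
  obtain ⟨η, hη⟩ := hstrictKT
  intro x hx hne
  obtain ⟨hf, hg⟩ := hη xbar hxbar x hx hne
  set v := η xbar x
  -- μ part is ≤ 0
  have hB : ∑ j, mu j * fderiv ℝ (fun y => g y j) xbar v ≤ 0 := by
    apply Finset.sum_nonpos
    intro j _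
    rcases eq_or_lt_of_le ((hS ▸ hxbar).2 j) with h0 | hlt
    · exact mul_nonpos_of_nonneg_of_nonpos (hmu0 j) (hg j h0)
    · have : mu j = 0 := by
        have := hcs j
        rcases mul_eq_zero.1 this with h | h
        · exact h
        · exact absurd h (ne_of_lt hlt)
      simp [this]
  -- λ part is ≥ 0
  have hA : 0 ≤ ∑ i, lam i * fderiv ℝ (fun y => f y i) xbar v := by
    have := hstat v
    linarith
  -- strict inequality with some λ positive
  obtain ⟨i0, hi0⟩ : ∃ i, 0 < lam i := by
    by_contra h
    push_neg at h
    exact hlamne (funext fun i => le_antisymm (h i) (hlam0 i))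
  have hstrictsum : ∑ i, lam i * fderiv ℝ (fun y => f y i) xbar v <
      ∑ i, lam i * (f x i - f xbar i) := by
    apply Finset.sum_lt_sum
    · intro i _
      exact mul_le_mul_of_nonneg_left (le_of_lt (hf i)) (hlam0 i)
    · exact ⟨i0, Finset.mem_univ i0, by
        exact mul_lt_mul_of_pos_left (hf i0) hi0⟩
  have : 0 < ∑ i, lam i * (f x i - f xbar i) := lt_of_le_of_lt hA hstrictsum
  have hsub : ∑ i, lam i * (f x i - f xbar i)
      = ∑ i, lam i * f x i - ∑ i, lam i * f xbar i := by
    rw [← Finset.sum_sub_distrib]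
    congr 1; ext i; ring
  linarith [hsub ▸ this]
end

section
/- Let f : X → ℝ^n, g : X → ℝ^m be Fréchet differentiable on open X ⊆ ℝ^s and S = {x ∈ X : g(x) ≤ 0}. Suppose that for every Kuhn-Tucker stationary point x̄ ∈ S with multipliers (λ̄, μ̄) (λ̄ ≥ 0, λ̄ ≠ 0, μ̄ ≥ 0, complementary slackness, and stationarity of the Lagrangian), x̄ is the unique global minimizer of λ̄·f on S. Then (P) is strictly KT-invex: for all feasible x ≠ x̄ there is η ∈ ℝ^s with f(x) − f(x̄) > Jf(x̄)·η componentwise and ∇gⱼ(x̄)·η ≤ 0 for all j ∈ I(x̄). -/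
open Finset

lemma nonneg_orthant_closed (ι : Type*) [Fintype ι] :
    IsClosed {μ : ι → ℝ | ∀ j, 0 ≤ μ j} := by
  have : {μ : ι → ℝ | ∀ j, 0 ≤ μ j} = ⋂ j, {μ | 0 ≤ μ j} := by
    ext μ; simp
  rw [this]
  exact isClosed_iInter fun j => isClosed_le continuous_const (continuous_apply j)

lemma indep_cone_closed {d : ℕ} {ι : Type*} [Fintype ι] (w : ι → (Fin d → ℝ))
    (hw : LinearIndependent ℝ w) :
    IsClosed ((fun μ : ι → ℝ => ∑ j, μ j • w j) '' {μ | ∀ j, 0 ≤ μ j}) := by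
  classical
  let φ : (ι → ℝ) →ₗ[ℝ] (Fin d → ℝ) := Fintype.linearCombination ℝ w
  have hφ : ∀ μ, φ μ = ∑ j, μ j • w j := fun μ => Fintype.linearCombination_apply ℝ w μ
  have hker : LinearMap.ker φ = ⊥ := by
    rw [LinearMap.ker_eq_bot']
    intro μ hμ
    rw [hφ] at hμ
    funext j
    exact Fintype.linearIndependent_iff.mp hw μ hμ j
  have hce := LinearMap.isClosedEmbedding_of_injective hker
  have : ((fun μ : ι → ℝ => ∑ j, μ j • w j) '' {μ | ∀ j, 0 ≤ μ j})
      = φ '' {μ | ∀ j, 0 ≤ μ j} := by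
    refine Set.image_congr fun μ _ => (hφ μ).symm
  rw [this]
  exact hce.isClosedMap _ (nonneg_orthant_closed ι)

lemma cone_carath_aux {d N : ℕ} (v : Fin N → (Fin d → ℝ)) :
    ∀ (k : ℕ) (μ : Fin N → ℝ), (univ.filter fun j => μ j ≠ 0).card ≤ k →
    (∀ j, 0 ≤ μ j) →
    ∃ ν : Fin N → ℝ, (∀ j, 0 ≤ ν j) ∧ ∑ j, ν j • v j = ∑ j, μ j • v j ∧
      LinearIndependent ℝ (fun j : (univ.filter fun j => ν j ≠ 0) => v j) := by
  intro k
  induction k with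
  | zero =>
    intro μ hcard hμ
    refine ⟨μ, hμ, rfl, ?_⟩
    have he : (univ.filter fun j => μ j ≠ 0) = ∅ := card_eq_zero.mp (Nat.le_zero.mp hcard)
    have : IsEmpty ((univ.filter fun j => μ j ≠ 0) : Finset (Fin N)) := by
      rw [he]; exact Finset.instIsEmpty
    exact linearIndependent_empty_type
  | succ k ih =>
    intro μ hcard hμ
    by_cases hind : LinearIndependent ℝ (fun j : (univ.filter fun j => μ j ≠ 0) => v j)
    · exact ⟨μ, hμ, rfl, hind⟩
    · obtain ⟨g, hg0, i0, hi0⟩ := Fintype.not_linearIndependent_iff.mp hind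
      classical
      have key : ∃ G : Fin N → ℝ, (∑ j, G j • v j = 0) ∧
          (∀ j, G j ≠ 0 → μ j ≠ 0) ∧ ∃ j, 0 < G j := by
        let G0 : Fin N → ℝ := fun j =>
          if h : j ∈ (univ.filter fun j => μ j ≠ 0) then g ⟨j, h⟩ else 0
        have hsum0 : ∑ j, G0 j • v j = 0 := by
          have e1 : ∑ j ∈ (univ.filter fun j => μ j ≠ 0), G0 j • v j
              = ∑ j : Fin N, G0 j • v j :=
            Finset.sum_subset (subset_univ _) (by
              intro x _ hx
              simp only [G0, dif_neg hx, zero_smul])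
          rw [← e1, ← Finset.sum_coe_sort (univ.filter fun j => μ j ≠ 0)
            (fun j => G0 j • v j), ← hg0]
          refine Finset.sum_congr rfl fun i _ => ?_
          simp only [G0, dif_pos i.2]
        have hsupp0 : ∀ j, G0 j ≠ 0 → μ j ≠ 0 := by
          intro j hj
          by_contra hmu
          have hnm : j ∉ (univ.filter fun j => μ j ≠ 0) := by simp [hmu]
          simp only [G0, dif_neg hnm] at hj
          exact hj rfl
        have hne : G0 (i0 : Fin N) ≠ 0 := by
          have : G0 (i0 : Fin N) = g i0 := by simp only [G0, dif_pos i0.2]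
          rw [this]; exact hi0
        rcases lt_or_gt_of_ne hne with hlt | hgt
        · refine ⟨-G0, ?_, ?_, ⟨i0, by simpa using hlt⟩⟩
          · have : ∑ j, (-G0) j • v j = -∑ j, G0 j • v j := by
              simp [neg_smul]
            rw [this, hsum0, neg_zero]
          · intro j hj; exact hsupp0 j (by simpa using hj)
        · exact ⟨G0, hsum0, hsupp0, ⟨i0, hgt⟩⟩
      obtain ⟨G, hGsum, hGsupp, j1, hj1⟩ := key
      have hPne : (univ.filter fun j => 0 < G j).Nonempty := ⟨j1, by simp [hj1]⟩
      obtain ⟨j0, hj0P, hj0⟩ :=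
        (univ.filter fun j => 0 < G j).exists_mem_eq_inf' hPne (fun j => μ j / G j)
      set t := (univ.filter fun j => 0 < G j).inf' hPne (fun j => μ j / G j) with htdef
      have hGj0 : 0 < G j0 := by
        simp only [mem_filter, mem_univ, true_and] at hj0P; exact hj0P
      have ht0 : 0 ≤ t := by
        rw [hj0]; exact div_nonneg (hμ j0) hGj0.le
      have hν0 : ∀ j, 0 ≤ μ j - t * G j := by
        intro j
        rcases le_or_gt (G j) 0 with h | h
        · have : t * G j ≤ 0 := mul_nonpos_of_nonneg_of_nonpos ht0 h
          linarith [hμ j]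
        · have hjP : j ∈ (univ.filter fun j => 0 < G j) := by simp [h]
          have h1 : t ≤ μ j / G j := Finset.inf'_le _ hjP
          have := (le_div_iff₀ h).mp h1
          linarith
      have hνsum : ∑ j, (μ j - t * G j) • v j = ∑ j, μ j • v j := by
        simp only [sub_smul, Finset.sum_sub_distrib]
        have : ∑ j, (t * G j) • v j = t • ∑ j, G j • v j := by
          rw [Finset.smul_sum]; exact Finset.sum_congr rfl fun j _ => (smul_smul _ _ _).symm
        rw [this, hGsum, smul_zero, sub_zero]
      have hνj0 : μ j0 - t * G j0 = 0 := by
        rw [hj0]; field_simp; ring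
      have hsub : (univ.filter fun j => (μ j - t * G j) ≠ 0) ⊂ (univ.filter fun j => μ j ≠ 0) := by
        constructor
        · intro j hj
          simp only [mem_filter, mem_univ, true_and] at hj ⊢
          by_contra hmu
          rcases eq_or_ne (G j) 0 with h | h
          · apply hj; rw [hmu, h]; ring
          · exact hGsupp j h hmu
        · intro hsub'
          have h1 : j0 ∈ (univ.filter fun j => μ j ≠ 0) := by
            simp only [mem_filter, mem_univ, true_and]
            exact hGsupp j0 (ne_of_gt hGj0)
          have h2 : j0 ∉ (univ.filter fun j => (μ j - t * G j) ≠ 0) := by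
            simp [hνj0]
          exact h2 (hsub' h1)
      have hcard' : (univ.filter fun j => (μ j - t * G j) ≠ 0).card ≤ k := by
        have := Finset.card_lt_card hsub
        omega
      obtain ⟨ρ, hρ0, hρsum, hρind⟩ := ih (fun j => μ j - t * G j) hcard' hν0
      exact ⟨ρ, hρ0, by rw [hρsum, hνsum], hρind⟩

lemma fg_cone_closed {d N : ℕ} (v : Fin N → (Fin d → ℝ)) :
    IsClosed {c : Fin d → ℝ | ∃ μ : Fin N → ℝ, (∀ j, 0 ≤ μ j) ∧ ∑ j, μ j • v j = c} := by
  classical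
  have hrw : {c : Fin d → ℝ | ∃ μ : Fin N → ℝ, (∀ j, 0 ≤ μ j) ∧ ∑ j, μ j • v j = c}
      = ⋃ T : Finset (Fin N),
        (if LinearIndependent ℝ (fun j : T => v (j : Fin N)) then
          ((fun μ : T → ℝ => ∑ j, μ j • v (j : Fin N)) '' {μ | ∀ j, 0 ≤ μ j}) else ∅) := by
    ext c
    simp only [Set.mem_setOf_eq, Set.mem_iUnion]
    constructor
    · rintro ⟨μ, hμ, hsum⟩
      obtain ⟨ν, hν0, hνsum, hνind⟩ := cone_carath_aux v _ μ le_rfl hμ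
      refine ⟨univ.filter fun j => ν j ≠ 0, ?_⟩
      rw [if_pos hνind]
      refine ⟨fun j => ν (j : Fin N), fun j => hν0 _, ?_⟩
      have e1 : ∑ j : (univ.filter fun j => ν j ≠ 0), ν (j : Fin N) • v (j : Fin N)
          = ∑ j ∈ (univ.filter fun j => ν j ≠ 0), ν j • v j :=
        Finset.sum_coe_sort (univ.filter fun j => ν j ≠ 0) (fun j => ν j • v j)
      have e2 : ∑ j ∈ (univ.filter fun j => ν j ≠ 0), ν j • v j = ∑ j : Fin N, ν j • v j :=
        Finset.sum_subset (subset_univ _) (by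
          intro x _ hx
          simp only [mem_filter, mem_univ, true_and, not_not] at hx
          rw [hx, zero_smul])
      dsimp only
      rw [e1, e2, hνsum, hsum]
    · rintro ⟨T, hT⟩
      split_ifs at hT with hind
      · obtain ⟨μ, hμ0, hμsum⟩ := hT
        refine ⟨fun j => if h : j ∈ T then μ ⟨j, h⟩ else 0, ?_, ?_⟩
        · intro j
          by_cases h : j ∈ T
          · simp only [dif_pos h]; exact hμ0 _
          · simp [dif_neg h]
        · have e2 : ∑ j ∈ T, (fun j => if h : j ∈ T then μ ⟨j, h⟩ else 0) j • v j
              = ∑ j : Fin N, (fun j => if h : j ∈ T then μ ⟨j, h⟩ else 0) j • v j :=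
            Finset.sum_subset (subset_univ _) (by
              intro x _ hx
              simp only [dif_neg hx, zero_smul])
          rw [← e2, ← Finset.sum_coe_sort T]
          rw [← hμsum]
          refine Finset.sum_congr rfl fun i _ => ?_
          simp only [dif_pos i.2]
      · exact absurd hT (Set.notMem_empty c)
  rw [hrw]
  refine isClosed_iUnion_of_finite fun T => ?_
  split_ifs with hind
  · exact indep_cone_closed _ hind
  · exact isClosed_empty

lemma clm_repr {d : ℕ} (φ : (Fin d → ℝ) →L[ℝ] ℝ) (w : Fin d → ℝ) :
    φ w = ∑ i, w i * φ (Pi.single i 1) := by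
  conv_lhs => rw [pi_eq_sum_univ w, map_sum]
  refine Finset.sum_congr rfl fun i _ => ?_
  rw [map_smul, smul_eq_mul]
  congr 2
  ext j
  simp [Pi.single_apply, eq_comm]

/-- Farkas' lemma. -/
lemma farkas {d N : ℕ} (v : Fin N → (Fin d → ℝ)) (c : Fin d → ℝ)
    (h : ∀ η : Fin d → ℝ, (∀ j, ∑ k, v j k * η k ≤ 0) → ∑ k, c k * η k ≤ 0) :
    ∃ μ : Fin N → ℝ, (∀ j, 0 ≤ μ j) ∧ ∑ j, μ j • v j = c := by
  by_contra hc
  have hcK : c ∉ {c : Fin d → ℝ | ∃ μ : Fin N → ℝ, (∀ j, 0 ≤ μ j) ∧ ∑ j, μ j • v j = c} := by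
    rintro ⟨μ0, h1, h2⟩; exact hc ⟨μ0, h1, h2⟩
  have hconv : Convex ℝ {c : Fin d → ℝ | ∃ μ : Fin N → ℝ, (∀ j, 0 ≤ μ j) ∧ ∑ j, μ j • v j = c} := by
    rintro x ⟨μ1, hμ1, hs1⟩ y ⟨μ2, hμ2, hs2⟩ p q hp hq hpq
    refine ⟨fun j => p * μ1 j + q * μ2 j,
      fun j => add_nonneg (mul_nonneg hp (hμ1 j)) (mul_nonneg hq (hμ2 j)), ?_⟩
    simp only [add_smul, mul_smul, Finset.sum_add_distrib, ← Finset.smul_sum]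
    rw [hs1, hs2]
  obtain ⟨φ, u, hK, hcu⟩ :=
    geometric_hahn_banach_closed_point hconv (fg_cone_closed v) hcK
  have h0K : (0 : Fin d → ℝ) ∈ {c : Fin d → ℝ | ∃ μ : Fin N → ℝ, (∀ j, 0 ≤ μ j) ∧ ∑ j, μ j • v j = c} :=
    ⟨0, fun j => le_rfl, by simp⟩
  have hu0 : 0 < u := by
    have := hK 0 h0K
    simpa using this
  have hvK : ∀ (j : Fin N) (t : ℝ), 0 ≤ t → t • v j ∈
      {c : Fin d → ℝ | ∃ μ : Fin N → ℝ, (∀ j, 0 ≤ μ j) ∧ ∑ j, μ j • v j = c} := by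
    intro j t ht
    refine ⟨fun j' => if j' = j then t else 0, fun j' => by dsimp; split <;> simp [ht], ?_⟩
    rw [Finset.sum_eq_single j (fun b _ hb => by simp [hb]) (by simp)]
    simp
  have hφv : ∀ j, φ (v j) ≤ 0 := by
    intro j
    by_contra hpos
    push_neg at hpos
    have h2 := hK _ (hvK j (u / φ (v j) + 1) (by positivity))
    rw [map_smul, smul_eq_mul] at h2
    have : (u / φ (v j) + 1) * φ (v j) = u + φ (v j) := by
      field_simp
    rw [this] at h2
    linarith
  -- let η be the representing vector of φ
  set η : Fin d → ℝ := fun k => φ (Pi.single k 1) with hη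
  have hφ : ∀ w, φ w = ∑ k, w k * η k := fun w => clm_repr φ w
  have hje : ∀ j, ∑ k, v j k * η k ≤ 0 := fun j => by rw [← hφ]; exact hφv j
  have := h η hje
  rw [← hφ] at this
  linarith

lemma motzkin {s n m : ℕ} (a : Fin n → (Fin s → ℝ) →L[ℝ] ℝ)
    (cg : Fin m → (Fin s → ℝ) →L[ℝ] ℝ) (b : Fin n → ℝ) (act : Fin m → Prop)
    (h : ¬∃ η : Fin s → ℝ, (∀ i, a i η < b i) ∧ (∀ j, act j → cg j η ≤ 0)) :
    ∃ (lam : Fin n → ℝ) (mu : Fin m → ℝ), (∀ i, 0 ≤ lam i) ∧ lam ≠ 0 ∧ (∀ j, 0 ≤ mu j) ∧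
      (∀ j, ¬act j → mu j = 0) ∧
      (∀ w : Fin s → ℝ, ∑ i, lam i * a i w + ∑ j, mu j * cg j w = 0) ∧
      ∑ i, lam i * b i ≤ 0 := by
  classical
  set O : Set (Fin n → ℝ) := {w | ∀ i, w i < 0} with hOdef
  set D : Set (Fin n → ℝ) := {w | ∃ η : Fin s → ℝ,
    (∀ j, act j → cg j η ≤ 0) ∧ ∀ i, w i = a i η - b i} with hDdef
  have hO_open : IsOpen O := by
    have : O = ⋂ i, (fun w : Fin n → ℝ => w i) ⁻¹' Set.Iio 0 := by
      ext w; simp [hOdef]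
    rw [this]
    exact isOpen_iInter_of_finite fun i => (continuous_apply i).isOpen_preimage _ isOpen_Iio
  have hO_conv : Convex ℝ O := by
    rintro w1 h1 w2 h2 p q hp hq hpq
    intro i
    simp only [Pi.add_apply, Pi.smul_apply, smul_eq_mul]
    rcases eq_or_lt_of_le hp with hp0 | hp0
    · have hq1 : q = 1 := by linarith
      rw [← hp0, hq1]; simpa using h2 i
    · have : q * w2 i ≤ 0 := mul_nonpos_of_nonneg_of_nonpos hq (h2 i).le
      have : p * w1 i < 0 := mul_neg_of_pos_of_neg hp0 (h1 i)
      linarith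
  have hD_conv : Convex ℝ D := by
    rintro w1 ⟨η1, hη1, hw1⟩ w2 ⟨η2, hη2, hw2⟩ p q hp hq hpq
    refine ⟨p • η1 + q • η2, ?_, ?_⟩
    · intro j hj
      rw [map_add, map_smul, map_smul, smul_eq_mul, smul_eq_mul]
      have := mul_nonpos_of_nonneg_of_nonpos hp (hη1 j hj)
      have := mul_nonpos_of_nonneg_of_nonpos hq (hη2 j hj)
      linarith
    · intro i
      simp only [Pi.add_apply, Pi.smul_apply, smul_eq_mul, map_add, map_smul]
      rw [hw1 i, hw2 i]
      have : p * (a i η1 - b i) + q * (a i η2 - b i)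
          = p * a i η1 + q * a i η2 - (p + q) * b i := by ring
      rw [this, hpq]
      ring
  have hdisj : Disjoint O D := by
    rw [Set.disjoint_left]
    rintro w hwO ⟨η, hηF, hwD⟩
    refine h ⟨η, fun i => ?_, hηF⟩
    have := hwO i
    rw [hwD i] at this
    linarith
  obtain ⟨φ, u, hOφ, hDφ⟩ := geometric_hahn_banach_open hO_conv hO_open hD_conv hdisj
  set lam : Fin n → ℝ := fun i => φ (Pi.single i 1) with hlam
  have hφ : ∀ w, φ w = ∑ i, w i * lam i := fun w => clm_repr φ w
  set ones : Fin n → ℝ := fun _ => 1 with hones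
  have hmemO : ∀ (δ : ℝ), 0 < δ → ∀ (i : Fin n) (t : ℝ), 0 ≤ t →
      ((-δ) • ones - t • (Pi.single i 1 : Fin n → ℝ)) ∈ O := by
    intro δ hδ i t ht i'
    simp only [Pi.sub_apply, Pi.smul_apply, smul_eq_mul, hones, Pi.single_apply]
    split_ifs <;> nlinarith
  have hF1 : ∀ (δ : ℝ), 0 < δ → ∀ (i : Fin n) (t : ℝ), 0 ≤ t →
      -δ * φ ones - t * lam i < u := by
    intro δ hδ i t ht
    have := hOφ _ (hmemO δ hδ i t ht)
    rw [map_sub, map_smul, map_smul, smul_eq_mul, smul_eq_mul] at this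
    exact this
  have hlam_nonneg : ∀ i, 0 ≤ lam i := by
    intro i
    by_contra hneg
    push_neg at hneg
    set A : ℝ := -lam i with hA
    have hApos : 0 < A := by simp [hA]; linarith
    set B : ℝ := u + φ ones with hB
    have key : ∀ t : ℝ, 0 ≤ t → t * A < B := by
      intro t ht
      have := hF1 1 one_pos i t ht
      simp only [hA, hB]; nlinarith
    have hB0 : 0 < B := by have := key 0 le_rfl; linarith
    have := key (B / A + 1) (add_pos (div_pos hB0 hApos) one_pos).le
    rw [add_mul, one_mul, div_mul_cancel₀ _ (ne_of_gt hApos)] at this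
    linarith
  have hF0 : ∀ (δ : ℝ), 0 < δ → -δ * φ ones < u := by
    intro δ hδ
    have hmem : ((-δ) • ones) ∈ O := by
      intro i'
      simp only [Pi.smul_apply, smul_eq_mul, hones]
      nlinarith
    have := hOφ _ hmem
    rw [map_smul, smul_eq_mul] at this
    exact this
  have hu_nonneg : 0 ≤ u := by
    by_contra hu
    push_neg at hu
    rcases le_or_gt (φ ones) 0 with hφ1 | hφ1
    · have := hF0 1 one_pos
      linarith
    · have hδ : 0 < -u / (2 * φ ones) := div_pos (by linarith) (by linarith)
      have h2 := hF0 _ hδ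
      have he : -(-u / (2 * φ ones)) * φ ones = u / 2 := by
        field_simp
      rw [he] at h2
      linarith
  -- η = 0 is feasible
  have h0D : (fun i => a i 0 - b i) ∈ D := by
    refine ⟨0, fun j _ => by rw [map_zero], fun i => rfl⟩
  have hDu : u ≤ ∑ i, (a i 0 - b i) * lam i := by
    have := hDφ _ h0D
    rwa [hφ] at this
  have hbu : ∑ i, lam i * b i ≤ -u := by
    have : ∑ i, (a i 0 - b i) * lam i = -∑ i, lam i * b i := by
      rw [← Finset.sum_neg_distrib]
      refine Finset.sum_congr rfl fun i _ => ?_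
      rw [map_zero]
      ring
    rw [this] at hDu
    linarith
  have hlam_ne : lam ≠ 0 := by
    intro h0
    have hz : ∀ w, φ w = 0 := by
      intro w
      rw [hφ, h0]
      simp
    have h1 : φ (-1 • ones) < u := hOφ _ (by
      intro i'
      simp only [Pi.smul_apply, smul_eq_mul, hones]
      norm_num)
    rw [hz] at h1
    have h2 := hDφ _ h0D
    rw [hz] at h2
    linarith
  -- the linear functional η ↦ ∑ i, lam i * a i η is nonnegative on the feasible cone
  have hLpos : ∀ η : Fin s → ℝ, (∀ j, act j → cg j η ≤ 0) →
      0 ≤ ∑ i, lam i * a i η := by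
    intro η hηF
    by_contra hL
    push_neg at hL
    set L : ℝ := ∑ i, lam i * a i η with hLdef
    set K : ℝ := u + ∑ i, lam i * b i with hK
    have key : ∀ t : ℝ, 0 ≤ t → K ≤ t * L := by
      intro t ht
      have hmem : (fun i => a i (t • η) - b i) ∈ D := by
        refine ⟨t • η, fun j hj => ?_, fun i => rfl⟩
        rw [map_smul, smul_eq_mul]
        exact mul_nonpos_of_nonneg_of_nonpos ht (hηF j hj)
      have h2 := hDφ _ hmem
      rw [hφ] at h2
      have he : ∑ i, (a i (t • η) - b i) * lam i = t * L - ∑ i, lam i * b i := by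
        rw [hLdef, Finset.mul_sum, ← Finset.sum_sub_distrib]
        refine Finset.sum_congr rfl fun i _ => ?_
        rw [map_smul, smul_eq_mul]
        ring
      rw [he] at h2
      simp only [hK]
      linarith
    have ht0 : (0:ℝ) ≤ (|K| + 1) / (-L) :=
      div_nonneg (by positivity) (by linarith)
    have := key _ ht0
    rw [div_mul_eq_mul_div, mul_comm] at this
    have hLne : L ≠ 0 := ne_of_lt hL
    have he : L * (|K| + 1) / -L = -(|K| + 1) := by
      rw [div_neg, mul_div_cancel_left₀ _ hLne]
    rw [he] at this
    have := neg_abs_le K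
    linarith
  -- apply Farkas' lemma
  set V : Fin m → (Fin s → ℝ) := fun j =>
    if act j then (fun k => cg j (Pi.single k 1)) else 0 with hV
  set cvec : Fin s → ℝ := fun k => -∑ i, lam i * a i (Pi.single k 1) with hcvec
  have hVdot : ∀ (j : Fin m) (η : Fin s → ℝ), act j → ∑ k, V j k * η k = cg j η := by
    intro j η hj
    rw [clm_repr (cg j) η]
    refine Finset.sum_congr rfl fun k _ => ?_
    simp only [hV, if_pos hj]
    ring
  have hVdot0 : ∀ (j : Fin m) (η : Fin s → ℝ), ¬act j → ∑ k, V j k * η k = 0 := by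
    intro j η hj
    refine Finset.sum_eq_zero fun k _ => ?_
    simp [hV, if_neg hj]
  have hcdot : ∀ η : Fin s → ℝ, ∑ k, cvec k * η k = -∑ i, lam i * a i η := by
    intro η
    have e1 : ∀ k, cvec k * η k = ∑ i, -(lam i * a i (Pi.single k 1) * η k) := by
      intro k
      simp only [hcvec]
      rw [neg_mul, Finset.sum_mul, ← Finset.sum_neg_distrib]
    calc ∑ k, cvec k * η k = ∑ k, ∑ i, -(lam i * a i (Pi.single k 1) * η k) :=
          Finset.sum_congr rfl fun k _ => e1 k
      _ = ∑ i, ∑ k, -(lam i * a i (Pi.single k 1) * η k) := Finset.sum_comm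
      _ = ∑ i, -(lam i * a i η) := by
          refine Finset.sum_congr rfl fun i _ => ?_
          rw [clm_repr (a i) η, Finset.mul_sum, ← Finset.sum_neg_distrib]
          refine Finset.sum_congr rfl fun k _ => ?_
          ring
      _ = -∑ i, lam i * a i η := by rw [Finset.sum_neg_distrib]
  have hyp : ∀ η : Fin s → ℝ, (∀ j, ∑ k, V j k * η k ≤ 0) → ∑ k, cvec k * η k ≤ 0 := by
    intro η hηV
    have hfeas : ∀ j, act j → cg j η ≤ 0 := by
      intro j hj
      rw [← hVdot j η hj]
      exact hηV j
    have := hLpos η hfeas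
    rw [hcdot]
    linarith
  obtain ⟨μ0, hμ00, hμ0sum⟩ := farkas V cvec hyp
  refine ⟨lam, fun j => if act j then μ0 j else 0, hlam_nonneg, hlam_ne, ?_, ?_, ?_, ?_⟩
  · intro j
    dsimp only
    split
    · exact hμ00 j
    · exact le_rfl
  · intro j hj
    simp [if_neg hj]
  · intro w
    have e1 : ∑ j, (if act j then μ0 j else 0) * cg j w
        = ∑ j, μ0 j * (∑ k, V j k * w k) := by
      refine Finset.sum_congr rfl fun j _ => ?_
      by_cases hj : act j
      · rw [if_pos hj, hVdot j w hj]
      · rw [if_neg hj, hVdot0 j w hj, zero_mul, mul_zero]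
    have e2 : ∑ j, μ0 j * (∑ k, V j k * w k) = ∑ k, cvec k * w k := by
      have : ∀ j, μ0 j * (∑ k, V j k * w k) = ∑ k, μ0 j * V j k * w k := by
        intro j
        rw [Finset.mul_sum]
        exact Finset.sum_congr rfl fun k _ => by ring
      rw [Finset.sum_congr rfl fun j _ => this j, Finset.sum_comm]
      refine Finset.sum_congr rfl fun k _ => ?_
      have := congrFun hμ0sum k
      rw [Finset.sum_apply] at this
      simp only [Pi.smul_apply, smul_eq_mul] at this
      rw [← Finset.sum_mul, this]
    rw [e1, e2, hcdot w]
    ring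
  · linarith

/-- If every Kuhn-Tucker stationary point is the unique global solution of its
weighting problem, then the problem is strictly KT-invex. -/
theorem unique_weighting_solutions_imply_strict_KT_invex (s n m : ℕ)
    (X : Set (Fin s → ℝ)) (hX : IsOpen X)
    (f : (Fin s → ℝ) → Fin n → ℝ) (g : (Fin s → ℝ) → Fin m → ℝ)
    (hdf : ∀ x ∈ X, ∀ i, DifferentiableAt ℝ (fun y => f y i) x)
    (hdg : ∀ x ∈ X, ∀ j, DifferentiableAt ℝ (fun y => g y j) x)
    (S : Set (Fin s → ℝ)) (hS : S = {x ∈ X | ∀ j, g x j ≤ 0})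
    (hKT : ∀ xbar ∈ S, ∀ (lam : Fin n → ℝ) (mu : Fin m → ℝ),
      (∀ i, 0 ≤ lam i) → lam ≠ 0 → (∀ j, 0 ≤ mu j) →
      (∀ j, mu j * g xbar j = 0) →
      (∀ v : Fin s → ℝ,
        ∑ i, lam i * fderiv ℝ (fun y => f y i) xbar v +
        ∑ j, mu j * fderiv ℝ (fun y => g y j) xbar v = 0) →
      ∀ x ∈ S, x ≠ xbar → ∑ i, lam i * f xbar i < ∑ i, lam i * f x i) :
    ∀ x ∈ S, ∀ xbar ∈ S, x ≠ xbar → ∃ η : Fin s → ℝ,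
      (∀ i, fderiv ℝ (fun z => f z i) xbar η < f x i - f xbar i) ∧
      (∀ j, g xbar j = 0 → fderiv ℝ (fun z => g z j) xbar η ≤ 0) := by
  intro x hx xbar hxbar hxne
  by_contra hcon
  obtain ⟨lam, mu, hlam0, hlamne, hmu0, hmuin, hstat, hb⟩ :=
    motzkin (fun i => fderiv ℝ (fun z => f z i) xbar)
      (fun j => fderiv ℝ (fun z => g z j) xbar)
      (fun i => f x i - f xbar i) (fun j => g xbar j = 0) hcon
  have hcs : ∀ j, mu j * g xbar j = 0 := by
    intro j
    by_cases hj : g xbar j = 0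
    · rw [hj, mul_zero]
    · rw [hmuin j hj, zero_mul]
  have hlt := hKT xbar hxbar lam mu hlam0 hlamne hmu0 hcs (fun v => hstat v) x hx hxne
  have hdiff : ∑ i, lam i * f x i - ∑ i, lam i * f xbar i
      = ∑ i, lam i * (f x i - f xbar i) := by
    rw [← Finset.sum_sub_distrib]
    exact Finset.sum_congr rfl fun i _ => by ring
  have hb' : ∑ i, lam i * (f x i - f xbar i) ≤ 0 := hb
  linarith
end

section
/- Let f : X → ℝ^n, g : X → ℝ^m be Fréchet differentiable on open X ⊆ ℝ^s, S = {x : g(x) ≤ 0}. If (P) is KT-invex, then for every Kuhn-Tucker stationary triple (x̄, λ̄, μ̄), the point x̄ is a global minimizer of x ↦ λ̄·f(x) on S. -/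
/-- KT-invexity implies every Kuhn-Tucker stationary point globally solves its
weighting problem (Theorem 3.5 of Osuna-Gomez et al.). -/
theorem KT_invex_implies_weighting_solution (s n m : ℕ)
    (X : Set (Fin s → ℝ)) (hX : IsOpen X)
    (f : (Fin s → ℝ) → Fin n → ℝ) (g : (Fin s → ℝ) → Fin m → ℝ)
    (hdf : ∀ x ∈ X, ∀ i, DifferentiableAt ℝ (fun y => f y i) x)
    (hdg : ∀ x ∈ X, ∀ j, DifferentiableAt ℝ (fun y => g y j) x)
    (S : Set (Fin s → ℝ)) (hS : S = {x ∈ X | ∀ j, g x j ≤ 0})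
    (hKTinvex : ∃ η : (Fin s → ℝ) → (Fin s → ℝ) → (Fin s → ℝ),
      ∀ x ∈ S, ∀ y ∈ S,
        (∀ i, fderiv ℝ (fun z => f z i) x (η x y) ≤ f y i - f x i) ∧
        (∀ j, g x j = 0 → fderiv ℝ (fun z => g z j) x (η x y) ≤ 0))
    (xbar : Fin s → ℝ) (hxbar : xbar ∈ S)
    (lam : Fin n → ℝ) (mu : Fin m → ℝ)
    (hlam0 : ∀ i, 0 ≤ lam i) (hlamne : lam ≠ 0) (hmu0 : ∀ j, 0 ≤ mu j)
    (hcs : ∀ j, mu j * g xbar j = 0)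
    (hstat : ∀ v : Fin s → ℝ,
      ∑ i, lam i * fderiv ℝ (fun y => f y i) xbar v +
      ∑ j, mu j * fderiv ℝ (fun y => g y j) xbar v = 0) :
    ∀ x ∈ S, ∑ i, lam i * f xbar i ≤ ∑ i, lam i * f x i := by
  obtain ⟨η, hη⟩ := hKTinvex
  intro x hx
  obtain ⟨hf, hg⟩ := hη xbar hxbar x hx
  set v := η xbar x
  -- each μⱼ term is ≤ 0
  have hgterm : ∀ j, mu j * fderiv ℝ (fun y => g y j) xbar v ≤ 0 := by
    intro j
    rcases eq_or_lt_of_le (hmu0 j) with h | h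
    · simp [← h]
    · have hgx0 : g xbar j = 0 := by
        rcases mul_eq_zero.mp (hcs j) with h1 | h1
        · exact absurd h1.symm (ne_of_lt h)
        · exact h1
      exact mul_nonpos_of_nonneg_of_nonpos (le_of_lt h) (hg j hgx0)
  have hsumg : ∑ j, mu j * fderiv ℝ (fun y => g y j) xbar v ≤ 0 :=
    Finset.sum_nonpos fun j _ => hgterm j
  have hsumf : 0 ≤ ∑ i, lam i * fderiv ℝ (fun y => f y i) xbar v := by
    have := hstat v
    linarith
  have hfbound : ∑ i, lam i * fderiv ℝ (fun y => f y i) xbar v ≤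
      ∑ i, lam i * (f x i - f xbar i) :=
    Finset.sum_le_sum fun i _ => mul_le_mul_of_nonneg_left (hf i) (hlam0 i)
  have : 0 ≤ ∑ i, lam i * (f x i - f xbar i) := le_trans hsumf hfbound
  have hsplit : ∑ i, lam i * (f x i - f xbar i)
      = ∑ i, lam i * f x i - ∑ i, lam i * f xbar i := by
    rw [← Finset.sum_sub_distrib]
    exact Finset.sum_congr rfl fun i _ => by ring
  linarith [hsplit ▸ this]
end

section
/- Let f : X → ℝ^n, g : X → ℝ^m be Fréchet differentiable on open X ⊆ ℝ^s, S = {x : g(x) ≤ 0}. The following are equivalent: (i) for every Kuhn-Tucker stationary triple (x̄, λ̄, μ̄), x̄ is a global minimizer of λ̄·f on S; (ii) (P) is KT-invex. -/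
open Finset

noncomputable section FarkasAux

variable {K : Type*} [Fintype K]

def dotp (u v : K → ℝ) : ℝ := ∑ t, u t * v t

lemma dotp_comm (u v : K → ℝ) : dotp u v = dotp v u := by
  simp [dotp, mul_comm]

lemma dotp_add_left (u u' v : K → ℝ) : dotp (u + u') v = dotp u v + dotp u' v := by
  simp [dotp, add_mul, Finset.sum_add_distrib]

lemma dotp_smul_left (r : ℝ) (u v : K → ℝ) : dotp (r • u) v = r * dotp u v := by
  simp [dotp, Finset.mul_sum, mul_assoc]

lemma dotp_zero_left (v : K → ℝ) : dotp 0 v = 0 := by simp [dotp]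

lemma dotp_sub_left (u u' v : K → ℝ) : dotp (u - u') v = dotp u v - dotp u' v := by
  simp [dotp, sub_mul, Finset.sum_sub_distrib]

lemma dotp_sub_right (u v v' : K → ℝ) : dotp u (v - v') = dotp u v - dotp u v' := by
  rw [dotp_comm, dotp_sub_left, dotp_comm v u, dotp_comm v' u]

lemma dotp_smul_right (r : ℝ) (u v : K → ℝ) : dotp u (r • v) = r * dotp u v := by
  rw [dotp_comm, dotp_smul_left, dotp_comm]

lemma dotp_sum_left {ι : Type*} (t : Finset ι) (w : ι → K → ℝ) (v : K → ℝ) :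
    dotp (∑ i ∈ t, w i) v = ∑ i ∈ t, dotp (w i) v := by
  classical
  induction t using Finset.induction with
  | empty => simp [dotp_zero_left]
  | insert _ _ hnot ih =>
    rw [Finset.sum_insert hnot, Finset.sum_insert hnot, dotp_add_left, ih]

lemma dotp_self_pos {b : K → ℝ} (hb : b ≠ 0) : 0 < dotp b b := by
  have : ∃ t, b t ≠ 0 := by
    by_contra hc
    push_neg at hc
    exact hb (funext hc)
  obtain ⟨t, ht⟩ := this
  refine Finset.sum_pos' (fun i _ => mul_self_nonneg _) ⟨t, Finset.mem_univ t, ?_⟩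
  exact mul_self_pos.mpr ht

/-- Farkas lemma, cone version, proved by induction. -/
lemma farkas_cone_s16 : ∀ (N : ℕ) (w : Fin N → K → ℝ) (b : K → ℝ),
    (∃ c : Fin N → ℝ, (∀ i, 0 ≤ c i) ∧ ∑ i, c i • w i = b) ∨
    (∃ y : K → ℝ, (∀ i, 0 ≤ dotp (w i) y) ∧ dotp b y < 0) := by
  intro N
  induction N with
  | zero =>
    intro w b
    by_cases hb : b = 0
    · exact Or.inl ⟨0, fun i => le_refl _, by simp [hb]⟩
    · refine Or.inr ⟨-b, fun i => i.elim0, ?_⟩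
      have h2 : dotp b (-b) = -dotp b b := by
        have h3 : (-b : K → ℝ) = (-1 : ℝ) • b := by funext t; simp
        rw [h3, dotp_smul_right]; ring
      rw [h2]
      linarith [dotp_self_pos hb]
  | succ N ih =>
    intro w b
    set w0 : Fin N → K → ℝ := fun i => w i.castSucc with hw0
    set wN : K → ℝ := w (Fin.last N) with hwN
    rcases ih w0 b with ⟨c, hc, hsum⟩ | ⟨y, hy, hby⟩
    · refine Or.inl ⟨Fin.snoc c 0, ?_, ?_⟩
      · intro i
        refine Fin.lastCases ?_ ?_ i <;> simp [Fin.snoc_last, Fin.snoc_castSucc, hc]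
      · rw [Fin.sum_univ_castSucc]
        simp only [Fin.snoc_castSucc, Fin.snoc_last, zero_smul, add_zero]
        exact hsum
    · by_cases hN : 0 ≤ dotp wN y
      · refine Or.inr ⟨y, ?_, hby⟩
        intro i
        refine Fin.lastCases ?_ ?_ i
        · exact hN
        · exact hy
      · push_neg at hN
        have hNne : dotp wN y ≠ 0 := ne_of_lt hN
        set proj : (K → ℝ) → (K → ℝ) := fun u => u - (dotp u y / dotp wN y) • wN with hproj
        have hprojdef : ∀ u : K → ℝ, proj u = u - (dotp u y / dotp wN y) • wN := fun u => rfl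
        rcases ih (fun i => proj (w0 i)) (proj b) with ⟨c, hc, hsum⟩ | ⟨z, hz, hbz⟩
        · set cN : ℝ := (dotp b y - ∑ i, c i * dotp (w0 i) y) / dotp wN y with hcN
          have hnum : dotp b y - ∑ i, c i * dotp (w0 i) y ≤ 0 := by
            have h1 : (0:ℝ) ≤ ∑ i, c i * dotp (w0 i) y :=
              Finset.sum_nonneg fun i _ => mul_nonneg (hc i) (hy i)
            linarith
          have hcNnn : 0 ≤ cN := by
            rw [hcN]
            exact div_nonneg_iff.mpr (Or.inr ⟨hnum, hN.le⟩)
          refine Or.inl ⟨Fin.snoc c cN, ?_, ?_⟩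
          · intro i
            refine Fin.lastCases ?_ ?_ i <;>
              simp [Fin.snoc_last, Fin.snoc_castSucc, hc, hcNnn]
          · rw [Fin.sum_univ_castSucc]
            simp only [Fin.snoc_castSucc, Fin.snoc_last]
            have hLHS : ∑ i, c i • proj (w0 i)
                = ∑ i, c i • w0 i - (∑ i, c i * (dotp (w0 i) y / dotp wN y)) • wN := by
              simp only [hprojdef, smul_sub, smul_smul]
              rw [Finset.sum_sub_distrib, Finset.sum_smul]
            rw [hLHS, hprojdef] at hsum
            have h1 : ∑ i, c i • w0 i
                = b - (dotp b y / dotp wN y) • wN + (∑ i, c i * (dotp (w0 i) y / dotp wN y)) • wN :=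
              eq_add_of_sub_eq hsum
            have hcN' : cN = dotp b y / dotp wN y - ∑ i, c i * (dotp (w0 i) y / dotp wN y) := by
              rw [hcN, sub_div, Finset.sum_div]
              simp_rw [mul_div_assoc]
            rw [h1, hcN', sub_smul]
            abel
        · set y' : K → ℝ := z - (dotp wN z / dotp wN y) • y with hy'
          have hkey : ∀ u : K → ℝ, dotp u y' = dotp (proj u) z := by
            intro u
            rw [hy', dotp_sub_right, dotp_smul_right, hprojdef, dotp_sub_left, dotp_smul_left]
            ring
          refine Or.inr ⟨y', ?_, ?_⟩
          · intro i
            refine Fin.lastCases ?_ ?_ i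
            · rw [hkey, hprojdef, div_self hNne, one_smul, sub_self, dotp_zero_left]
            · intro i
              rw [hkey]
              exact hz i
          · rw [hkey]; exact hbz

end FarkasAux

noncomputable section FarkasAux2

/-- Farkas lemma, inequality-system version. -/
lemma farkas_ineq (s N : ℕ) (a : Fin N → Fin s → ℝ) (d : Fin N → ℝ)
    (h : ∀ c : Fin N → ℝ, (∀ i, 0 ≤ c i) → ∑ i, c i • a i = 0 → 0 ≤ ∑ i, c i * d i) :
    ∃ v : Fin s → ℝ, ∀ i, dotp (a i) v ≤ d i := by
  set w : Fin N → Fin (s+1) → ℝ := fun i => Fin.snoc (a i) (d i) with hw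
  set b : Fin (s+1) → ℝ := Fin.snoc (0 : Fin s → ℝ) (-1) with hb
  rcases farkas_cone_s16 N w b with ⟨c, hc, hsum⟩ | ⟨y, hy, hby⟩
  · exfalso
    have hlast : ∑ i, c i * d i = -1 := by
      have h0 := congrFun hsum (Fin.last s)
      simpa [hw, hb, Finset.sum_apply, Fin.snoc_last] using h0
    have hfirst : ∑ i, c i • a i = 0 := by
      funext t
      have h0 := congrFun hsum (Fin.castSucc t)
      simpa [hw, hb, Finset.sum_apply, Fin.snoc_castSucc] using h0
    have := h c hc hfirst
    rw [hlast] at this; linarith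
  · have hbylast : dotp b y = - y (Fin.last s) := by
      rw [hb, dotp, Fin.sum_univ_castSucc]
      simp [Fin.snoc_castSucc, Fin.snoc_last]
    have hτ : 0 < y (Fin.last s) := by rw [hbylast] at hby; linarith
    set u : Fin s → ℝ := fun t => y (Fin.castSucc t) with hu
    have hdecomp : ∀ i, dotp (w i) y = dotp (a i) u + d i * y (Fin.last s) := by
      intro i
      rw [hw, dotp, Fin.sum_univ_castSucc]
      simp [Fin.snoc_castSucc, Fin.snoc_last, dotp, hu]
    refine ⟨(-(y (Fin.last s))⁻¹) • u, fun i => ?_⟩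
    have h1 := hy i
    rw [hdecomp i] at h1
    rw [dotp_smul_right]
    have h3 : -(y (Fin.last s))⁻¹ * dotp (a i) u = (-(dotp (a i) u)) / (y (Fin.last s)) := by
      rw [div_eq_mul_inv]; ring
    rw [h3, div_le_iff₀ hτ]
    linarith

end FarkasAux2

section Aux

lemma clm_repr_s16 (s : ℕ) (L : (Fin s → ℝ) →L[ℝ] ℝ) (v : Fin s → ℝ) :
    L v = dotp (fun t => L (Pi.single t 1)) v := by
  have hv : v = ∑ t, v t • (Pi.single t 1 : Fin s → ℝ) := by
    funext u
    simp [Finset.sum_apply, Pi.single_apply]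
  conv_lhs => rw [hv]
  rw [map_sum]
  simp [dotp, mul_comm]

end Aux
/-- Corrected Theorem 3.6: every Kuhn-Tucker stationary point globally solves
its weighting problem iff the problem is KT-invex. -/
theorem KT_points_solve_weighting_iff_KT_invex (s n m : ℕ)
    (X : Set (Fin s → ℝ)) (hX : IsOpen X)
    (f : (Fin s → ℝ) → Fin n → ℝ) (g : (Fin s → ℝ) → Fin m → ℝ)
    (hdf : ∀ x ∈ X, ∀ i, DifferentiableAt ℝ (fun y => f y i) x)
    (hdg : ∀ x ∈ X, ∀ j, DifferentiableAt ℝ (fun y => g y j) x)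
    (S : Set (Fin s → ℝ)) (hS : S = {x ∈ X | ∀ j, g x j ≤ 0}) :
    (∀ xbar ∈ S, ∀ (lam : Fin n → ℝ) (mu : Fin m → ℝ),
      (∀ i, 0 ≤ lam i) → lam ≠ 0 → (∀ j, 0 ≤ mu j) →
      (∀ j, mu j * g xbar j = 0) →
      (∀ v : Fin s → ℝ,
        ∑ i, lam i * fderiv ℝ (fun y => f y i) xbar v +
        ∑ j, mu j * fderiv ℝ (fun y => g y j) xbar v = 0) →
      ∀ x ∈ S, ∑ i, lam i * f xbar i ≤ ∑ i, lam i * f x i)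
    ↔
    (∃ η : (Fin s → ℝ) → (Fin s → ℝ) → (Fin s → ℝ),
      ∀ x ∈ S, ∀ y ∈ S,
        (∀ i, fderiv ℝ (fun z => f z i) x (η x y) ≤ f y i - f x i) ∧
        (∀ j, g x j = 0 → fderiv ℝ (fun z => g z j) x (η x y) ≤ 0)) := by
  constructor
  · -- KT points solve weighting problems ⇒ KT-invex
    intro h
    have key : ∀ x y : Fin s → ℝ, ∃ v : Fin s → ℝ, x ∈ S → y ∈ S →
        (∀ i, fderiv ℝ (fun z => f z i) x v ≤ f y i - f x i) ∧
        (∀ j, g x j = 0 → fderiv ℝ (fun z => g z j) x v ≤ 0) := by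
      intro x y
      by_cases hxy : x ∈ S ∧ y ∈ S
      swap
      · exact ⟨0, fun h1 h2 => absurd ⟨h1, h2⟩ hxy⟩
      obtain ⟨hxS, hyS⟩ := hxy
      set F : Fin n → (Fin s → ℝ) →L[ℝ] ℝ := fun i => fderiv ℝ (fun z => f z i) x with hF
      set G : Fin m → (Fin s → ℝ) →L[ℝ] ℝ := fun j => fderiv ℝ (fun z => g z j) x with hG
      set A : Fin n → Fin s → ℝ := fun i t => F i (Pi.single t 1) with hA
      set Bg : Fin m → Fin s → ℝ := fun j t => G j (Pi.single t 1) with hBg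
      set B : Fin m → Fin s → ℝ := fun j => if g x j = 0 then Bg j else 0 with hB
      set a : Fin (n + m) → Fin s → ℝ := Fin.append A B with ha
      set d : Fin (n + m) → ℝ := Fin.append (fun i => f y i - f x i) (fun _ => 0) with hd
      have hfar : ∃ v : Fin s → ℝ, ∀ k, dotp (a k) v ≤ d k := by
        apply farkas_ineq
        intro c hc hzero
        set lam : Fin n → ℝ := fun i => c (Fin.castAdd m i) with hlam
        set mu : Fin m → ℝ := fun j => if g x j = 0 then c (Fin.natAdd n j) else 0 with hmu
        have hsplit : ∑ k, c k • a k
            = ∑ i, lam i • A i + ∑ j, mu j • Bg j := by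
          rw [Fin.sum_univ_add]
          congr 1
          · apply Finset.sum_congr rfl
            intro i _
            rw [ha, Fin.append_left]
          · apply Finset.sum_congr rfl
            intro j _
            rw [ha, Fin.append_right, hB, hmu]
            by_cases hj : g x j = 0 <;> simp [hj]
        have hz' : ∑ i, lam i • A i + ∑ j, mu j • Bg j = 0 := by
          rw [← hsplit]; exact hzero
        have hdval : ∑ k, c k * d k = ∑ i, lam i * (f y i - f x i) := by
          rw [Fin.sum_univ_add]
          have h2 : ∑ j : Fin m, c (Fin.natAdd n j) * d (Fin.natAdd n j) = 0 := by
            apply Finset.sum_eq_zero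
            intro j _
            rw [hd, Fin.append_right]
            ring
          have h1 : ∀ i : Fin n, c (Fin.castAdd m i) * d (Fin.castAdd m i)
              = lam i * (f y i - f x i) := by
            intro i
            rw [hd, Fin.append_left, hlam]
          rw [h2, Finset.sum_congr rfl (fun i _ => h1 i), add_zero]
        rw [hdval]
        by_cases hlam0 : lam = 0
        · apply Finset.sum_nonneg
          intro i _
          rw [hlam0]
          simp
        · have hmunn : ∀ j, 0 ≤ mu j := by
            intro j
            rw [hmu]
            dsimp only
            split
            · exact hc _
            · exact le_rfl
          have hcompl : ∀ j, mu j * g x j = 0 := by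
            intro j
            rw [hmu]
            dsimp only
            split
            · next hj => rw [hj]; ring
            · simp
          have hmin := h x hxS lam mu (fun i => hc _) hlam0 hmunn hcompl ?_ y hyS
          · have : ∑ i, lam i * (f y i - f x i)
                = ∑ i, lam i * f y i - ∑ i, lam i * f x i := by
              simp [mul_sub, Finset.sum_sub_distrib]
            rw [this]
            linarith
          · intro v
            have hFrep : ∀ i, (F i) v = dotp (A i) v := fun i => clm_repr_s16 s (F i) v
            have hGrep : ∀ j, (G j) v = dotp (Bg j) v := fun j => clm_repr_s16 s (G j) v
            have : ∑ i, lam i * (F i) v + ∑ j, mu j * (G j) v = 0 := by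
              have e1 : ∑ i, lam i * (F i) v = dotp (∑ i, lam i • A i) v := by
                rw [dotp_sum_left]
                exact Finset.sum_congr rfl fun i _ => by rw [hFrep, dotp_smul_left]
              have e2 : ∑ j, mu j * (G j) v = dotp (∑ j, mu j • Bg j) v := by
                rw [dotp_sum_left]
                exact Finset.sum_congr rfl fun j _ => by rw [hGrep, dotp_smul_left]
              rw [e1, e2, ← dotp_add_left, hz', dotp_zero_left]
            exact this
      obtain ⟨v, hv⟩ := hfar
      refine ⟨v, fun _ _ => ⟨?_, ?_⟩⟩
      · intro i
        have := hv (Fin.castAdd m i)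
        rw [ha, Fin.append_left, hd, Fin.append_left] at this
        rw [show fderiv ℝ (fun z => f z i) x = F i from rfl, clm_repr_s16 s (F i) v]
        exact this
      · intro j hj
        have := hv (Fin.natAdd n j)
        rw [ha, Fin.append_right, hd, Fin.append_right, hB] at this
        simp only [hj, if_true] at this
        rw [show fderiv ℝ (fun z => g z j) x = G j from rfl, clm_repr_s16 s (G j) v]
        exact this
    choose η hη using key
    exact ⟨η, fun x hx y hy => hη x y hx hy⟩
  · -- KT-invex ⇒ KT points solve weighting problems
    rintro ⟨η, hη⟩ xbar hxbar lam mu hlam hlam0 hmu hcomp hstat x hx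
    obtain ⟨hf', hg'⟩ := hη xbar hxbar x hx
    have hstatv := hstat (η xbar x)
    have hgsum : ∑ j, mu j * fderiv ℝ (fun y => g y j) xbar (η xbar x) ≤ 0 := by
      apply Finset.sum_nonpos
      intro j _
      by_cases hj : g xbar j = 0
      · have := mul_le_mul_of_nonneg_left (hg' j hj) (hmu j)
        simpa using this
      · have hmuj : mu j = 0 := by
          rcases mul_eq_zero.mp (hcomp j) with h0 | h0
          · exact h0
          · exact absurd h0 hj
        simp [hmuj]
    have hle : ∑ i, lam i * fderiv ℝ (fun y => f y i) xbar (η xbar x)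
        ≤ ∑ i, lam i * (f x i - f xbar i) := by
      apply Finset.sum_le_sum
      intro i _
      exact mul_le_mul_of_nonneg_left (hf' i) (hlam i)
    have hsub : ∑ i, lam i * (f x i - f xbar i)
        = ∑ i, lam i * f x i - ∑ i, lam i * f xbar i := by
      simp [mul_sub, Finset.sum_sub_distrib]
    rw [hsub] at hle
    linarith
end

section
/- If a Fréchet differentiable vector function f : S → ℝ^n on an open set S ⊆ ℝ^s is strictly invex, then every vector critical point of f is a weakly efficient solution of (P), and moreover it is the unique weakly efficient solution among global minimizers of the associated weighting problem. -/
/-- For a strictly invex function, every vector critical point is weakly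
efficient and is the unique global solution of its weighting problem. -/
theorem strictly_invex_critical_point_weakly_efficient_unique (s n : ℕ)
    (S : Set (Fin s → ℝ)) (hS : IsOpen S) (f : (Fin s → ℝ) → Fin n → ℝ)
    (hdiff : ∀ x ∈ S, ∀ i, DifferentiableAt ℝ (fun y => f y i) x)
    (hstrict : ∀ x ∈ S, ∀ y ∈ S, y ≠ x → ∃ η : Fin s → ℝ,
      ∀ i, fderiv ℝ (fun z => f z i) x η < f y i - f x i)
    (xbar : Fin s → ℝ) (hxbar : xbar ∈ S)
    (lam : Fin n → ℝ) (hlam0 : ∀ i, 0 ≤ lam i) (hlamne : lam ≠ 0)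
    (hcrit : ∀ v : Fin s → ℝ, ∑ i, lam i * fderiv ℝ (fun y => f y i) xbar v = 0) :
    (¬ ∃ x ∈ S, ∀ i, f x i < f xbar i) ∧
    (∀ x ∈ S, x ≠ xbar → ∑ i, lam i * f xbar i < ∑ i, lam i * f x i) := by
  -- there is some index with positive weight
  obtain ⟨i0, hi0⟩ : ∃ i, 0 < lam i := by
    by_contra h
    push_neg at h
    exact hlamne (funext fun i => le_antisymm (h i) (hlam0 i))
  have key : ∀ x ∈ S, x ≠ xbar → ∑ i, lam i * f xbar i < ∑ i, lam i * f x i := by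
    intro x hx hne
    obtain ⟨η, hη⟩ := hstrict xbar hxbar x hx hne
    have h1 : ∑ i, lam i * fderiv ℝ (fun y => f y i) xbar η
        < ∑ i, lam i * (f x i - f xbar i) := by
      apply Finset.sum_lt_sum
      · intro i _
        rcases lt_or_eq_of_le (hlam0 i) with h | h
        · exact le_of_lt (by nlinarith [hη i])
        · simp [← h]
      · exact ⟨i0, Finset.mem_univ i0, by nlinarith [hη i0]⟩
    rw [hcrit η] at h1
    have : ∑ i, lam i * (f x i - f xbar i)
        = ∑ i, lam i * f x i - ∑ i, lam i * f xbar i := by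
      rw [← Finset.sum_sub_distrib]
      congr 1; ext i; ring
    linarith [this ▸ h1]
  refine ⟨?_, key⟩
  rintro ⟨x, hx, hlt⟩
  have hne : x ≠ xbar := by
    intro h; exact lt_irrefl _ (h ▸ hlt i0)
  have h2 := key x hx hne
  have h3 : ∑ i, lam i * f x i ≤ ∑ i, lam i * f xbar i :=
    Finset.sum_le_sum fun i _ => mul_le_mul_of_nonneg_left (le_of_lt (hlt i)) (hlam0 i)
  linarith
end
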